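/- arXiv:1612.06724 — 9 statements merged into one kernel-verified Lean document; each statement's English description precedes it below -/
import Mathlib

section
/- Under the stated topological assumptions, for every α > 0 and every v ∈ V the Tikhonov functional T_α(·; v) = ‖K(·) − v‖^q + αR(·) attains a minimum on U, i.e. there exists u_α ∈ U with T_α(u_α; v) ≤ T_α(u; v) for all u ∈ U. -/
/-! Direct method: a minimizing sequence with decreasing values stays in one sublevel set, so
a subsequence converges; every tail of it lies in the sublevel set of its first value, and
sequential closedness puts the limit there too, so the limit is below the infimum. -/

open Filter Topology

/-- The Tikhonov functional `T_α(u; v) = ‖K u − v‖^q + α R(u)`, with values in `[-∞,+∞]`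
(the regularizer `R` takes values in `[0,+∞]`, encoded as `EReal` with `0 ≤ R`). -/
noncomputable def Tik {U V : Type*} [NormedAddCommGroup V]
    (K : U → V) (R : U → EReal) (q α : ℝ) (v : V) (u : U) : EReal :=
  ((‖K u - v‖ ^ q : ℝ) : EReal) + (α : EReal) * R u

section DirectMethod

variable {X β : Type*} [TopologicalSpace X]

def IsSeqPrecompact (s : Set X) : Prop :=
  ∀ ⦃u : ℕ → X⦄, (∀ n, u n ∈ s) →
    ∃ φ : ℕ → ℕ, StrictMono φ ∧ ∃ x, Tendsto (u ∘ φ) atTop (𝓝 x)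

theorem le_comp_of_tendsto_of_isSeqClosed_sublevel [Preorder β] {f : X → β}
    (hcl : ∀ M, IsSeqClosed {x | f x ≤ M}) {u : ℕ → X} {x : X}
    (hu : Tendsto u atTop (𝓝 x)) (hanti : Antitone (f ∘ u)) (n : ℕ) : f x ≤ f (u n) :=
  hcl (f (u n)) (x := fun k => u (k + n)) (fun k => hanti (Nat.le_add_left n k))
    ((tendsto_add_atTop_iff_nat n).mpr hu)

theorem exists_forall_le_of_isSeqClosed_of_isSeqPrecompact_sublevel [Nonempty X]
    [CompleteLinearOrder β] [TopologicalSpace β] [OrderTopology β] [FirstCountableTopology β]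
    {f : X → β} (hcl : ∀ M, IsSeqClosed {x | f x ≤ M})
    (hcpt : ∀ M, IsSeqPrecompact {x | f x ≤ M}) : ∃ x, ∀ y, f x ≤ f y := by
  obtain ⟨a, ha_anti, ha_lim, ha_mem⟩ :=
    exists_seq_tendsto_sInf (Set.range_nonempty f) (OrderBot.bddBelow (Set.range f))
  choose u hu using ha_mem
  have hfu : f ∘ u = a := funext hu
  obtain ⟨φ, hφ, x, hx⟩ := hcpt (a 0) (u := u) fun k =>
    show f (u k) ≤ a 0 from hu k ▸ ha_anti (Nat.zero_le k)
  have hanti : Antitone (f ∘ (u ∘ φ)) := by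
    rw [← Function.comp_assoc, hfu]
    exact ha_anti.comp_monotone hφ.monotone
  have hlim : Tendsto (f ∘ (u ∘ φ)) atTop (𝓝 (sInf (Set.range f))) := by
    rw [← Function.comp_assoc, hfu]
    exact ha_lim.comp hφ.tendsto_atTop
  have hx_le_inf : f x ≤ sInf (Set.range f) :=
    ge_of_tendsto hlim (Eventually.of_forall
      (le_comp_of_tendsto_of_isSeqClosed_sublevel hcl hx hanti))
  exact ⟨x, fun y => hx_le_inf.trans (sInf_le (Set.mem_range_self y))⟩

end DirectMethod

theorem tikhonov_minimizer_exists_general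
    {U V : Type*}
    [NormedAddCommGroup V]
    (τ : TopologicalSpace U)
    (K : U → V) (R : U → EReal)
    (q : ℝ)
    (hdom : ∃ u, R u ≠ ⊤)
    -- (1) sublevel sets of the Tikhonov functional are τ-sequentially precompact
    (hcpt : ∀ α : ℝ, 0 < α → ∀ v : V, ∀ M : EReal, ∀ u : ℕ → U,
      (∀ k, Tik K R q α v (u k) ≤ M) →
      ∃ φ : ℕ → ℕ, StrictMono φ ∧ ∃ ubar : U,
        Tendsto (u ∘ φ) atTop (@nhds U τ ubar))
    -- (4) sublevel sets are τ-sequentially closed and K is sequentially continuous there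
    (hcl : ∀ α : ℝ, 0 < α → ∀ v : V, ∀ M : EReal, ∀ (uk : ℕ → U) (u : U),
      (∀ k, Tik K R q α v (uk k) ≤ M) →
      Tendsto uk atTop (@nhds U τ u) →
      Tik K R q α v u ≤ M ∧ Tendsto (fun k => K (uk k)) atTop (nhds (K u))) :
    ∀ α : ℝ, 0 < α → ∀ v : V, ∃ uα : U, ∀ u : U,
      Tik K R q α v uα ≤ Tik K R q α v u := by
  intro α hα v
  let _ : TopologicalSpace U := τ
  have : Nonempty U := let ⟨u, _⟩ := hdom; ⟨u⟩
  exact exists_forall_le_of_isSeqClosed_of_isSeqPrecompact_sublevel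
    (fun M _ _ hu hlim => (hcl α hα v M _ _ hu hlim).1) (fun M u hu => hcpt α hα v M u hu)

/-- Under the stated topological assumptions, for every `α > 0` and every
`v ∈ V` the Tikhonov functional `T_α(·; v)` attains a minimum on `U`. -/
theorem tikhonov_minimizer_exists
    {U V : Type*} [NormedAddCommGroup U] [NormedSpace ℝ U] [CompleteSpace U]
    [NormedAddCommGroup V] [NormedSpace ℝ V] [CompleteSpace V]
    (τ : TopologicalSpace U)
    (K : U → V) (R : U → EReal) (hR0 : ∀ u, 0 ≤ R u)
    (q : ℝ) (hq : 1 ≤ q)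
    (hdom : ∃ u, R u ≠ ⊤)
    -- (1) sublevel sets of the Tikhonov functional are τ-sequentially precompact
    (hcpt : ∀ α : ℝ, 0 < α → ∀ v : V, ∀ M : EReal, ∀ u : ℕ → U,
      (∀ k, Tik K R q α v (u k) ≤ M) →
      ∃ φ : ℕ → ℕ, StrictMono φ ∧ ∃ ubar : U,
        Tendsto (u ∘ φ) atTop (@nhds U τ ubar))
    -- (2) the norm of V is sequentially lower semicontinuous
    (hnormlsc : ∀ (vk : ℕ → V) (v : V), Tendsto vk atTop (nhds v) →
      ((‖v‖ : ℝ) : EReal) ≤ Filter.liminf (fun k => ((‖vk k‖ : ℝ) : EReal)) atTop)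
    -- (3) R is τ-sequentially lower semicontinuous
    (hRlsc : ∀ (uk : ℕ → U) (u : U), Tendsto uk atTop (@nhds U τ u) →
      R u ≤ Filter.liminf (fun k => R (uk k)) atTop)
    -- (4) sublevel sets are τ-sequentially closed and K is sequentially continuous there
    (hcl : ∀ α : ℝ, 0 < α → ∀ v : V, ∀ M : EReal, ∀ (uk : ℕ → U) (u : U),
      (∀ k, Tik K R q α v (uk k) ≤ M) →
      Tendsto uk atTop (@nhds U τ u) →
      Tik K R q α v u ≤ M ∧ Tendsto (fun k => K (uk k)) atTop (nhds (K u))) :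
    ∀ α : ℝ, 0 < α → ∀ v : V, ∃ uα : U, ∀ u : U,
      Tik K R q α v uα ≤ Tik K R q α v u :=
  tikhonov_minimizer_exists_general τ K R q hdom hcpt hcl
end

section
/- Under the stated topological assumptions, minimization of the Tikhonov functional is stable: fix α > 0 and v^δ ∈ V, and let (v_k) ⊂ V with ‖v_k − v^δ‖ → 0. Then every sequence (u_k) with u_k a minimizer of T_α(·; v_k) has a τ-convergent subsequence, and the τ-limit of every τ-convergent subsequence of (u_k) is a minimizer of T_α(·; v^δ). -/
/-!
Each minimizer `u_k` of `T_α(·; v_k)` does at least as well as a fixed `u₀` with `R u₀ < ∞`, and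
`T_α(u₀; v_k)` stays bounded as `v_k → v^δ`. Since `‖v_k − v^δ‖` is bounded too, the values
`T_α(u_k; v^δ)` lie in a single sublevel set, which gives a convergent subsequence. Along a
subsequence `u_k → ū`, the residual converges and `R` is lower semicontinuous, so
`T_α(ū; v^δ) ≤ liminf T_α(u_k; v_k) ≤ liminf T_α(u; v_k) = T_α(u; v^δ)` for every `u`.
-/

open Filter

open Topology

section Tikhonov

variable {U V : Type*} [NormedAddCommGroup V] {K : U → V} {R : U → EReal} {q α : ℝ}

lemma residual_le_Tik {v : V} {u : U} (hα : 0 ≤ α) (hR : 0 ≤ R u) :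
    ((‖K u - v‖ ^ q : ℝ) : EReal) ≤ Tik K R q α v u :=
  le_add_of_nonneg_right (mul_nonneg (EReal.coe_nonneg.2 hα) hR)

lemma mul_le_Tik (v : V) (u : U) : (α : EReal) * R u ≤ Tik K R q α v u :=
  le_add_of_nonneg_left (EReal.coe_nonneg.2 (Real.rpow_nonneg (norm_nonneg _) q))

lemma Tik_ne_top {v : V} {u : U} (hR0 : 0 ≤ R u) (hR : R u ≠ ⊤) : Tik K R q α v u ≠ ⊤ := by
  have hRbot : R u ≠ ⊥ := ne_bot_of_le_ne_bot EReal.zero_ne_bot hR0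
  rw [Tik, ← EReal.coe_toReal hR hRbot, ← EReal.coe_mul, ← EReal.coe_add]
  exact EReal.coe_ne_top _

lemma Tik_le_of_Tik_le_of_dist_le {w v : V} {u : U} {c D : ℝ} (hq : 0 < q) (hα : 0 ≤ α)
    (hR : 0 ≤ R u) (hc : Tik K R q α w u ≤ c) (hD : dist w v ≤ D) :
    Tik K R q α v u ≤ ((c ^ q⁻¹ + D) ^ q + c : ℝ) := by
  have hres : ‖K u - w‖ ^ q ≤ c := EReal.coe_le_coe_iff.1 ((residual_le_Tik hα hR).trans hc)
  have hc0 : 0 ≤ c := (Real.rpow_nonneg (norm_nonneg _) q).trans hres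
  have hres' : ‖K u - w‖ ≤ c ^ q⁻¹ := (Real.le_rpow_inv_iff_of_pos (norm_nonneg _) hc0 hq).2 hres
  have hnorm : ‖K u - v‖ ≤ c ^ q⁻¹ + D :=
    (norm_sub_le_norm_sub_add_norm_sub _ w _).trans (add_le_add hres' (dist_eq_norm w v ▸ hD))
  rw [EReal.coe_add]
  exact add_le_add (EReal.coe_le_coe_iff.2 (Real.rpow_le_rpow (norm_nonneg _) hnorm hq.le))
    ((mul_le_Tik w u).trans hc)

lemma tendsto_residual {ι : Type*} {l : Filter ι} {xs ys : ι → V} {x y : V} (hq : 0 ≤ q)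
    (hx : Tendsto xs l (𝓝 x)) (hy : Tendsto ys l (𝓝 y)) :
    Tendsto (fun i => ((‖xs i - ys i‖ ^ q : ℝ) : EReal)) l (𝓝 (‖x - y‖ ^ q : ℝ)) :=
  EReal.tendsto_coe.2 ((hx.sub hy).norm.rpow_const (Or.inr hq))

lemma tendsto_Tik_of_tendsto {ι : Type*} {l : Filter ι} {vs : ι → V} {v : V} {u : U}
    (hq : 0 ≤ q) (hv : Tendsto vs l (𝓝 v)) :
    Tendsto (fun i => Tik K R q α (vs i) u) l (𝓝 (Tik K R q α v u)) :=
  (EReal.continuousAt_add (Or.inl (EReal.coe_ne_top _)) (Or.inl (EReal.coe_ne_bot _))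
    ).tendsto.comp ((tendsto_residual hq tendsto_const_nhds hv).prodMk_nhds tendsto_const_nhds)

lemma Tik_le_liminf_of_tendsto {ι : Type*} {l : Filter ι} [l.NeBot] {us : ι → U} {vs : ι → V}
    {u : U} {v : V} (hq : 0 ≤ q) (hα : 0 ≤ α) (hK : Tendsto (fun i => K (us i)) l (𝓝 (K u)))
    (hv : Tendsto vs l (𝓝 v)) (hR : R u ≤ liminf (fun i => R (us i)) l) :
    Tik K R q α v u ≤ liminf (fun i => Tik K R q α (vs i) (us i)) l := by
  have hαE : (0 : EReal) ≤ α := EReal.coe_nonneg.2 hα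
  calc Tik K R q α v u
      ≤ liminf (fun i => ((‖K (us i) - vs i‖ ^ q : ℝ) : EReal)) l
        + liminf (fun i => (α : EReal) * R (us i)) l := by
        rw [EReal.liminf_const_mul_of_nonneg_of_ne_top hαE (EReal.coe_ne_top α),
          (tendsto_residual hq hK hv).liminf_eq]
        exact add_le_add le_rfl (mul_le_mul_of_nonneg_left hR hαE)
    _ ≤ liminf (fun i => Tik K R q α (vs i) (us i)) l := EReal.le_liminf_add

lemma exists_forall_Tik_le_of_minimizers (hq : 0 < q) (hα : 0 ≤ α) (hR0 : ∀ u, 0 ≤ R u)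
    (hdom : ∃ u, R u ≠ ⊤) {vs : ℕ → V} {v : V} (hv : Tendsto vs atTop (𝓝 v)) {us : ℕ → U}
    (hmin : ∀ k u, Tik K R q α (vs k) (us k) ≤ Tik K R q α (vs k) u) :
    ∃ M : ℝ, ∀ k, Tik K R q α v (us k) ≤ M := by
  obtain ⟨u₀, hu₀⟩ := hdom
  obtain ⟨D, hD⟩ := (hv.dist tendsto_const_nhds).bddAbove_range
  have hDk : ∀ k, dist (vs k) v ≤ D := fun k => hD ⟨k, rfl⟩
  let c₀ := (Tik K R q α v u₀).toReal
  have hc₀ : ∀ k, Tik K R q α (vs k) u₀ ≤ ((c₀ ^ q⁻¹ + D) ^ q + c₀ : ℝ) := fun k =>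
    Tik_le_of_Tik_le_of_dist_le hq hα (hR0 u₀) (EReal.le_coe_toReal (Tik_ne_top (hR0 u₀) hu₀))
      ((dist_comm _ _).trans_le (hDk k))
  exact ⟨_, fun k =>
    Tik_le_of_Tik_le_of_dist_le hq hα (hR0 _) ((hmin k u₀).trans (hc₀ k)) (hDk k)⟩

end Tikhonov

theorem tikhonov_stability_general
    {U V : Type*}
    [NormedAddCommGroup V]
    (τ : TopologicalSpace U)
    (K : U → V) (R : U → EReal) (hR0 : ∀ u, 0 ≤ R u)
    (q : ℝ) (hq : 1 ≤ q)
    (hdom : ∃ u, R u ≠ ⊤)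
    -- (1) sublevel sets of the Tikhonov functional are τ-sequentially precompact
    (hcpt : ∀ α : ℝ, 0 < α → ∀ v : V, ∀ M : EReal, ∀ u : ℕ → U,
      (∀ k, Tik K R q α v (u k) ≤ M) →
      ∃ φ : ℕ → ℕ, StrictMono φ ∧ ∃ ubar : U,
        Tendsto (u ∘ φ) atTop (@nhds U τ ubar))
    -- (3) R is τ-sequentially lower semicontinuous
    (hRlsc : ∀ (uk : ℕ → U) (u : U), Tendsto uk atTop (@nhds U τ u) →
      R u ≤ Filter.liminf (fun k => R (uk k)) atTop)
    -- (4) sublevel sets are τ-sequentially closed and K is sequentially continuous there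
    (hcl : ∀ α : ℝ, 0 < α → ∀ v : V, ∀ M : EReal, ∀ (uk : ℕ → U) (u : U),
      (∀ k, Tik K R q α v (uk k) ≤ M) →
      Tendsto uk atTop (@nhds U τ u) →
      Tik K R q α v u ≤ M ∧ Tendsto (fun k => K (uk k)) atTop (nhds (K u)))
    -- the fixed regularization parameter, data and minimizing sequence
    (α : ℝ) (hα : 0 < α) (vδ : V) (vk : ℕ → V)
    (hv : Tendsto vk atTop (nhds vδ))
    (uk : ℕ → U)
    (hmin : ∀ k, ∀ u : U, Tik K R q α (vk k) (uk k) ≤ Tik K R q α (vk k) u) :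
    (∃ φ : ℕ → ℕ, StrictMono φ ∧ ∃ ubar : U,
      Tendsto (uk ∘ φ) atTop (@nhds U τ ubar)) ∧
    (∀ (φ : ℕ → ℕ) (ubar : U), StrictMono φ →
      Tendsto (uk ∘ φ) atTop (@nhds U τ ubar) →
      ∀ u : U, Tik K R q α vδ ubar ≤ Tik K R q α vδ u) := by
  have hq₀ : 0 < q := one_pos.trans_le hq
  obtain ⟨M, hM⟩ := exists_forall_Tik_le_of_minimizers hq₀ hα.le hR0 hdom hv hmin
  refine ⟨hcpt α hα vδ M uk hM, fun φ ubar hφ hlim u => ?_⟩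
  have hK := (hcl α hα vδ M (uk ∘ φ) ubar (fun k => hM (φ k)) hlim).2
  have hvφ := hv.comp hφ.tendsto_atTop
  calc Tik K R q α vδ ubar
      ≤ liminf (fun k => Tik K R q α (vk (φ k)) (uk (φ k))) atTop :=
        Tik_le_liminf_of_tendsto hq₀.le hα.le hK hvφ (hRlsc _ ubar hlim)
    _ ≤ liminf (fun k => Tik K R q α (vk (φ k)) u) atTop :=
        liminf_le_liminf (Eventually.of_forall fun k => hmin (φ k) u)
    _ = Tik K R q α vδ u := (tendsto_Tik_of_tendsto hq₀.le hvφ).liminf_eq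

/-- Stability of Tikhonov minimization: if `v_k → v^δ` in norm and each `u_k`
minimizes `T_α(·; v_k)`, then `(u_k)` has a τ-convergent subsequence and the τ-limit of
every τ-convergent subsequence minimizes `T_α(·; v^δ)`. -/
theorem tikhonov_stability
    {U V : Type*} [NormedAddCommGroup U] [NormedSpace ℝ U] [CompleteSpace U]
    [NormedAddCommGroup V] [NormedSpace ℝ V] [CompleteSpace V]
    (τ : TopologicalSpace U)
    (K : U → V) (R : U → EReal) (hR0 : ∀ u, 0 ≤ R u)
    (q : ℝ) (hq : 1 ≤ q)
    (hdom : ∃ u, R u ≠ ⊤)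
    -- (1) sublevel sets of the Tikhonov functional are τ-sequentially precompact
    (hcpt : ∀ α : ℝ, 0 < α → ∀ v : V, ∀ M : EReal, ∀ u : ℕ → U,
      (∀ k, Tik K R q α v (u k) ≤ M) →
      ∃ φ : ℕ → ℕ, StrictMono φ ∧ ∃ ubar : U,
        Tendsto (u ∘ φ) atTop (@nhds U τ ubar))
    -- (2) the norm of V is sequentially lower semicontinuous
    (hnormlsc : ∀ (vk : ℕ → V) (v : V), Tendsto vk atTop (nhds v) →
      ((‖v‖ : ℝ) : EReal) ≤ Filter.liminf (fun k => ((‖vk k‖ : ℝ) : EReal)) atTop)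
    -- (3) R is τ-sequentially lower semicontinuous
    (hRlsc : ∀ (uk : ℕ → U) (u : U), Tendsto uk atTop (@nhds U τ u) →
      R u ≤ Filter.liminf (fun k => R (uk k)) atTop)
    -- (4) sublevel sets are τ-sequentially closed and K is sequentially continuous there
    (hcl : ∀ α : ℝ, 0 < α → ∀ v : V, ∀ M : EReal, ∀ (uk : ℕ → U) (u : U),
      (∀ k, Tik K R q α v (uk k) ≤ M) →
      Tendsto uk atTop (@nhds U τ u) →
      Tik K R q α v u ≤ M ∧ Tendsto (fun k => K (uk k)) atTop (nhds (K u)))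
    -- the fixed regularization parameter, data and minimizing sequence
    (α : ℝ) (hα : 0 < α) (vδ : V) (vk : ℕ → V)
    (hv : Tendsto vk atTop (nhds vδ))
    (uk : ℕ → U)
    (hmin : ∀ k, ∀ u : U, Tik K R q α (vk k) (uk k) ≤ Tik K R q α (vk k) u) :
    (∃ φ : ℕ → ℕ, StrictMono φ ∧ ∃ ubar : U,
      Tendsto (uk ∘ φ) atTop (@nhds U τ ubar)) ∧
    (∀ (φ : ℕ → ℕ) (ubar : U), StrictMono φ →
      Tendsto (uk ∘ φ) atTop (@nhds U τ ubar) →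
      ∀ u : U, Tik K R q α vδ ubar ≤ Tik K R q α vδ u) :=
  tikhonov_stability_general τ K R hR0 q hq hdom hcpt hRlsc hcl α hα vδ vk hv uk hmin
end

section
/- Under the stated topological assumptions, suppose in addition that there exists u ∈ U with K(u) = v† and R(u) < ∞, and that the parameter choice rule α : (0,∞) → (0,∞) satisfies α(δ) → 0 and δ^q/α(δ) → 0 as δ → 0. Then for every sequence δ_k → 0, every sequence of data (v_k) with ‖v_k − v†‖ ≤ δ_k, and every sequence (u_k) with u_k a minimizer of T_{α(δ_k)}(·; v_k), the sequence (u_k) has a τ-convergent subsequence, and the τ-limit of every τ-convergent subsequence is an R-minimizing solution, i.e. a minimizer of R over {u ∈ U : K(u) = v†}. -/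
open Filter

/-- Convergence of Tikhonov regularization: if an exact solution with finite
`R`-value exists and the parameter choice rule satisfies `α(δ) → 0` and `δ^q/α(δ) → 0` as
`δ → 0`, then for `δ_k → 0`, data `v_k` with `‖v_k − v†‖ ≤ δ_k` and minimizers `u_k` of
`T_{α(δ_k)}(·; v_k)`, the sequence `(u_k)` has a τ-convergent subsequence, and the τ-limit
of every τ-convergent subsequence is an `R`-minimizing solution. -/
theorem tikhonov_convergence
    {U V : Type*} [NormedAddCommGroup U] [NormedSpace ℝ U] [CompleteSpace U]
    [NormedAddCommGroup V] [NormedSpace ℝ V] [CompleteSpace V]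
    (τ : TopologicalSpace U)
    (K : U → V) (R : U → EReal) (hR0 : ∀ u, 0 ≤ R u)
    (q : ℝ) (hq : 1 ≤ q)
    (hdom : ∃ u, R u ≠ ⊤)
    -- (1) sublevel sets of the Tikhonov functional are τ-sequentially precompact
    (hcpt : ∀ α : ℝ, 0 < α → ∀ v : V, ∀ M : EReal, ∀ u : ℕ → U,
      (∀ k, Tik K R q α v (u k) ≤ M) →
      ∃ φ : ℕ → ℕ, StrictMono φ ∧ ∃ ubar : U,
        Tendsto (u ∘ φ) atTop (@nhds U τ ubar))
    -- (2) the norm of V is sequentially lower semicontinuous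
    (hnormlsc : ∀ (vk : ℕ → V) (v : V), Tendsto vk atTop (nhds v) →
      ((‖v‖ : ℝ) : EReal) ≤ Filter.liminf (fun k => ((‖vk k‖ : ℝ) : EReal)) atTop)
    -- (3) R is τ-sequentially lower semicontinuous
    (hRlsc : ∀ (uk : ℕ → U) (u : U), Tendsto uk atTop (@nhds U τ u) →
      R u ≤ Filter.liminf (fun k => R (uk k)) atTop)
    -- (4) sublevel sets are τ-sequentially closed and K is sequentially continuous there
    (hcl : ∀ α : ℝ, 0 < α → ∀ v : V, ∀ M : EReal, ∀ (uk : ℕ → U) (u : U),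
      (∀ k, Tik K R q α v (uk k) ≤ M) →
      Tendsto uk atTop (@nhds U τ u) →
      Tik K R q α v u ≤ M ∧ Tendsto (fun k => K (uk k)) atTop (nhds (K u)))
    -- (5) existence of an exact solution with finite R-value
    (vdag : V) (hexact : ∃ u : U, K u = vdag ∧ R u ≠ ⊤)
    -- (6) the parameter choice rule
    (αr : ℝ → ℝ) (hαpos : ∀ δ : ℝ, 0 < δ → 0 < αr δ)
    (hα0 : Tendsto αr (nhdsWithin 0 (Set.Ioi 0)) (nhds 0))
    (hqα : Tendsto (fun δ : ℝ => δ ^ q / αr δ) (nhdsWithin 0 (Set.Ioi 0)) (nhds 0))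
    -- the noise levels, data and minimizers
    (δk : ℕ → ℝ) (hδpos : ∀ k, 0 < δk k) (hδ0 : Tendsto δk atTop (nhds 0))
    (vk : ℕ → V) (hvk : ∀ k, ‖vk k - vdag‖ ≤ δk k)
    (uk : ℕ → U)
    (hmin : ∀ k, ∀ u : U,
      Tik K R q (αr (δk k)) (vk k) (uk k) ≤ Tik K R q (αr (δk k)) (vk k) u) :
    (∃ φ : ℕ → ℕ, StrictMono φ ∧ ∃ ubar : U,
      Tendsto (uk ∘ φ) atTop (@nhds U τ ubar)) ∧
    (∀ (φ : ℕ → ℕ) (ubar : U), StrictMono φ →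
      Tendsto (uk ∘ φ) atTop (@nhds U τ ubar) →
      K ubar = vdag ∧ ∀ u : U, K u = vdag → R ubar ≤ R u) := by
  classical
  obtain ⟨ud, hKud, hRud⟩ := hexact
  have hq0 : (0:ℝ) ≤ q := le_trans zero_le_one hq
  have hq0' : (0:ℝ) < q := lt_of_lt_of_le one_pos hq
  set αk : ℕ → ℝ := fun k => αr (δk k) with hαkdef
  have hαkpos : ∀ k, 0 < αk k := fun k => hαpos _ (hδpos k)
  have hδ0' : Tendsto δk atTop (nhdsWithin 0 (Set.Ioi 0)) :=
    tendsto_nhdsWithin_iff.mpr ⟨hδ0, Eventually.of_forall fun k => hδpos k⟩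
  have hαk0 : Tendsto αk atTop (nhds 0) := hα0.comp hδ0'
  set εk : ℕ → ℝ := fun k => δk k ^ q / αk k with hεkdef
  have hεk0 : Tendsto εk atTop (nhds 0) := hqα.comp hδ0'
  have hδq0 : Tendsto (fun k => δk k ^ q) atTop (nhds 0) := by
    have heq : (fun k => δk k ^ q) = fun k => εk k * αk k := by
      funext k
      rw [hεkdef]
      exact (div_mul_cancel₀ _ (ne_of_gt (hαkpos k))).symm
    rw [heq]
    simpa using hεk0.mul hαk0
  have hRnb : ∀ u : U, R u ≠ ⊥ := fun u =>
    (lt_of_lt_of_le (by simp : (⊥:EReal) < 0) (hR0 u)).ne'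
  have htR : ∀ u : U, R u ≠ ⊤ → 0 ≤ (R u).toReal := fun u hu => by
    simpa using EReal.toReal_le_toReal (hR0 u) (by simp) hu
  -- finiteness of R (uk k)
  have Rfin : ∀ k, R (uk k) ≠ ⊤ := by
    intro k hT
    have h := hmin k ud
    rw [Tik, Tik, hKud, hT, EReal.coe_mul_top_of_pos (hαkpos k),
      EReal.coe_add_top, ← EReal.coe_toReal hRud (hRnb ud), ← EReal.coe_mul,
      ← EReal.coe_add, top_le_iff] at h
    exact EReal.coe_ne_top _ h
  -- the key real-valued estimate against any exact solution
  have est : ∀ u : U, K u = vdag → R u ≠ ⊤ → ∀ k : ℕ,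
      ‖K (uk k) - vk k‖ ^ q + αk k * (R (uk k)).toReal
        ≤ δk k ^ q + αk k * (R u).toReal := by
    intro u hKu hRu k
    have h := hmin k u
    rw [Tik, Tik, hKu, ← EReal.coe_toReal hRu (hRnb u),
      ← EReal.coe_toReal (Rfin k) (hRnb _), ← EReal.coe_mul, ← EReal.coe_mul,
      ← EReal.coe_add, ← EReal.coe_add, EReal.coe_le_coe_iff] at h
    have hd : ‖vdag - vk k‖ ^ q ≤ δk k ^ q :=
      Real.rpow_le_rpow (norm_nonneg _) (by rw [norm_sub_rev]; exact hvk k) hq0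
    linarith
  -- bound on R (uk k)
  have hρle : ∀ u : U, K u = vdag → R u ≠ ⊤ → ∀ k : ℕ,
      (R (uk k)).toReal ≤ εk k + (R u).toReal := by
    intro u hKu hRu k
    have h := est u hKu hRu k
    have hn : 0 ≤ ‖K (uk k) - vk k‖ ^ q := Real.rpow_nonneg (norm_nonneg _) q
    have hαε : αk k * εk k = δk k ^ q := by
      rw [hεkdef]
      exact mul_div_cancel₀ _ (ne_of_gt (hαkpos k))
    have hmul : αk k * (R (uk k)).toReal ≤ αk k * (εk k + (R u).toReal) := by
      rw [mul_add, hαε]; linarith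
    exact le_of_mul_le_mul_left hmul (hαkpos k)
  -- the discrepancy tends to zero
  have hnq : ∀ k, ‖K (uk k) - vk k‖ ^ q ≤ δk k ^ q + αk k * (R ud).toReal := by
    intro k
    have h := est ud hKud hRud k
    have : 0 ≤ αk k * (R (uk k)).toReal :=
      mul_nonneg (hαkpos k).le (htR _ (Rfin k))
    linarith
  have hnq0 : Tendsto (fun k => ‖K (uk k) - vk k‖ ^ q) atTop (nhds 0) := by
    refine squeeze_zero (fun k => Real.rpow_nonneg (norm_nonneg _) q) hnq ?_
    simpa using hδq0.add (hαk0.mul_const (R ud).toReal)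
  have hn0 : Tendsto (fun k => ‖K (uk k) - vk k‖) atTop (nhds 0) := by
    have hc : ContinuousAt (fun x : ℝ => x ^ q⁻¹) 0 :=
      Real.continuousAt_rpow_const 0 q⁻¹ (Or.inr (by positivity))
    have h0 : (0:ℝ) ^ q⁻¹ = 0 := Real.zero_rpow (inv_ne_zero (ne_of_gt hq0'))
    have := (hc.tendsto.comp hnq0)
    rw [h0] at this
    have heq : ((fun x : ℝ => x ^ q⁻¹) ∘ fun k => ‖K (uk k) - vk k‖ ^ q)
        = fun k => ‖K (uk k) - vk k‖ := by
      funext k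
      exact Real.rpow_rpow_inv (norm_nonneg _) (ne_of_gt hq0')
    rwa [heq] at this
  have hm0 : Tendsto (fun k => ‖K (uk k) - vdag‖) atTop (nhds 0) := by
    refine squeeze_zero (fun k => norm_nonneg _)
      (g := fun k => ‖K (uk k) - vk k‖ + δk k) (fun k => ?_) ?_
    · calc ‖K (uk k) - vdag‖ = ‖(K (uk k) - vk k) + (vk k - vdag)‖ := by abel_nf
        _ ≤ ‖K (uk k) - vk k‖ + ‖vk k - vdag‖ := norm_add_le _ _
        _ ≤ ‖K (uk k) - vk k‖ + δk k := by linarith [hvk k]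
    · simpa using hn0.add hδ0
  have hKd : Tendsto (fun k => K (uk k)) atTop (nhds vdag) :=
    tendsto_iff_norm_sub_tendsto_zero.mpr hm0
  -- eventual bound on the fixed Tikhonov functional (α = 1, v = vdag)
  set M : EReal := ((2 + (R ud).toReal : ℝ) : EReal) with hMdef
  obtain ⟨N, hN⟩ := (Filter.eventually_atTop.mp
    ((hm0.eventually (eventually_le_nhds one_pos)).and
      (hεk0.eventually (eventually_le_nhds one_pos))))
  have hbound : ∀ k, N ≤ k → Tik K R q 1 vdag (uk k) ≤ M := by
    intro k hk
    obtain ⟨hmk, hεkk⟩ := hN k hk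
    rw [Tik, ← EReal.coe_toReal (Rfin k) (hRnb _),
      ← EReal.coe_mul, ← EReal.coe_add, hMdef, EReal.coe_le_coe_iff]
    have h1 : ‖K (uk k) - vdag‖ ^ q ≤ 1 :=
      Real.rpow_le_one (norm_nonneg _) hmk hq0
    have h2 : (R (uk k)).toReal ≤ εk k + (R ud).toReal := hρle ud hKud hRud k
    linarith
  constructor
  · -- existence of a τ-convergent subsequence
    obtain ⟨φ, hφ, ubar, hconv⟩ := hcpt 1 one_pos vdag M (fun k => uk (k + N))
      (fun k => hbound _ (Nat.le_add_left N k))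
    exact ⟨fun k => φ k + N, fun a b h => Nat.add_lt_add_right (hφ h) N, ubar, hconv⟩
  · intro φ ubar hφ hconv
    set ψ : ℕ → ℕ := fun k => φ (k + N) with hψdef
    have hψN : ∀ k, N ≤ ψ k := fun k => le_trans (Nat.le_add_left N k) hφ.le_apply
    have hψtop : Tendsto ψ atTop atTop :=
      hφ.tendsto_atTop.comp (tendsto_add_atTop_nat N)
    have hconvψ : Tendsto (fun k => uk (ψ k)) atTop (@nhds U τ ubar) :=
      hconv.comp (tendsto_add_atTop_nat N)
    obtain ⟨-, hKconv⟩ := hcl 1 one_pos vdag M (fun k => uk (ψ k)) ubar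
      (fun k => hbound _ (hψN k)) hconvψ
    have hKψ : Tendsto (fun k => K (uk (ψ k))) atTop (nhds vdag) := hKd.comp hψtop
    have hKubar : K ubar = vdag := tendsto_nhds_unique hKconv hKψ
    refine ⟨hKubar, fun u hKu => ?_⟩
    by_cases hRu : R u = ⊤
    · rw [hRu]; exact le_top
    · have h1 : R ubar ≤ Filter.liminf (fun k => R (uk (φ k))) atTop :=
        hRlsc (uk ∘ φ) ubar hconv
      have h2 : ∀ k, R (uk (φ k)) ≤ ((εk (φ k) + (R u).toReal : ℝ) : EReal) := by
        intro k
        rw [← EReal.coe_toReal (Rfin (φ k)) (hRnb _), EReal.coe_le_coe_iff]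
        exact hρle u hKu hRu (φ k)
      have h3 : Tendsto (fun k => ((εk (φ k) + (R u).toReal : ℝ) : EReal)) atTop
          (nhds (((R u).toReal : ℝ) : EReal)) := by
        rw [EReal.tendsto_coe]
        simpa using (hεk0.comp hφ.tendsto_atTop).add_const (R u).toReal
      calc R ubar ≤ Filter.liminf (fun k => R (uk (φ k))) atTop := h1
        _ ≤ Filter.liminf (fun k => ((εk (φ k) + (R u).toReal : ℝ) : EReal)) atTop :=
            liminf_le_liminf (Eventually.of_forall h2)
        _ = (((R u).toReal : ℝ) : EReal) := h3.liminf_eq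
        _ = R u := EReal.coe_toReal hRu (hRnb u)
end

section
/- Convergence rates, case q > 1: let u† be an R-minimizing solution of K(u) = v†, let u* ∈ ∂R(u†), and suppose there exist constants β₁ ∈ [0,1) and ᾱ, β₂, ρ > 0 with ᾱ·R(u†) < ρ such that ⟨u*, u† − u⟩ ≤ β₁·D_{u*}(u; u†) + β₂·‖K(u) − v†‖ holds for all u with T_ᾱ(u; v†) ≤ ρ. Assume the parameter choice satisfies c₁δ^{q−1} ≤ α(δ) ≤ c₂δ^{q−1} for constants c₁, c₂ > 0. Then there exist C > 0 and δ₀ > 0 such that for all 0 < δ ≤ δ₀, all data v^δ with ‖v^δ − v†‖ ≤ δ, and every minimizer u_α^δ of T_{α(δ)}(·; v^δ), one has D_{u*}(u_α^δ; u†) ≤ Cδ and ‖K(u_α^δ) − v^δ‖ ≤ Cδ. -/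
/-- The Bregman distance `D_{u*}(v; u†) = R(v) − R(u†) − ⟨u*, v − u†⟩` associated to `R`
at `(u†, u*)`. -/
noncomputable def Bregman {U : Type*} [NormedAddCommGroup U] [NormedSpace ℝ U]
    (R : U → EReal) (udag : U) (ustar : U →L[ℝ] ℝ) (v : U) : EReal :=
  R v - R udag - ((ustar (v - udag) : ℝ) : EReal)

set_option maxHeartbeats 1000000

/-- Convergence rates for `q > 1`: under the source condition
`⟨u*, u† − u⟩ ≤ β₁ D_{u*}(u; u†) + β₂ ‖K u − v†‖` on the sublevel set
`{u : T_ᾱ(u; v†) ≤ ρ}` (with `β₁ ∈ [0,1)`, `ᾱ, β₂, ρ > 0`, `ᾱ R(u†) < ρ`) and the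
parameter choice `α(δ) ∼ δ^{q−1}`, one gets `D_{u*}(u_α^δ; u†) = O(δ)` and
`‖K(u_α^δ) − v^δ‖ = O(δ)`. -/
theorem tikhonov_convergence_rates_q_gt_one
    {U V : Type*} [NormedAddCommGroup U] [NormedSpace ℝ U] [CompleteSpace U]
    [NormedAddCommGroup V] [NormedSpace ℝ V] [CompleteSpace V]
    (K : U → V) (R : U → EReal) (hR0 : ∀ u, 0 ≤ R u)
    (q : ℝ) (hq : 1 < q)
    (vdag : V) (udag : U)
    -- u† is an R-minimizing solution with finite R-value
    (hsol : K udag = vdag) (hRmin : ∀ u : U, K u = vdag → R udag ≤ R u)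
    (hfin : R udag ≠ ⊤)
    -- u* is a subgradient of R at u†
    (ustar : U →L[ℝ] ℝ)
    (hsub : ∀ v : U, R udag + ((ustar (v - udag) : ℝ) : EReal) ≤ R v)
    -- the source condition
    (β₁ : ℝ) (hβ₁0 : 0 ≤ β₁) (hβ₁1 : β₁ < 1)
    (αbar β₂ ρ : ℝ) (hαbar : 0 < αbar) (hβ₂ : 0 < β₂) (hρ : 0 < ρ)
    (hαρ : (αbar : EReal) * R udag < (ρ : EReal))
    (hsc : ∀ u : U, Tik K R q αbar vdag u ≤ (ρ : EReal) →
      ((ustar (udag - u) : ℝ) : EReal) ≤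
        (β₁ : EReal) * Bregman R udag ustar u + ((β₂ * ‖K u - vdag‖ : ℝ) : EReal))
    -- the parameter choice rule α(δ) ∼ δ^{q−1}
    (αr : ℝ → ℝ) (c₁ c₂ : ℝ) (hc₁ : 0 < c₁) (hc₂ : 0 < c₂)
    (hpc : ∀ δ : ℝ, 0 < δ → c₁ * δ ^ (q - 1) ≤ αr δ ∧ αr δ ≤ c₂ * δ ^ (q - 1)) :
    ∃ C : ℝ, 0 < C ∧ ∃ δ₀ : ℝ, 0 < δ₀ ∧
      ∀ δ : ℝ, 0 < δ → δ ≤ δ₀ → ∀ vδ : V, ‖vδ - vdag‖ ≤ δ →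
        ∀ uαδ : U,
          (∀ u : U, Tik K R q (αr δ) vδ uαδ ≤ Tik K R q (αr δ) vδ u) →
          Bregman R udag ustar uαδ ≤ ((C * δ : ℝ) : EReal) ∧
          ‖K uαδ - vδ‖ ≤ C * δ := by
  -- basic positivity facts
  have hq0 : (0:ℝ) < q := by linarith
  have hs0 : (0:ℝ) < q - 1 := by linarith
  have hβ₁1' : (0:ℝ) < 1 - β₁ := by linarith
  -- R udag is a real number r ≥ 0
  have hRb : R udag ≠ ⊥ := ne_bot_of_le_ne_bot (by simp) (hR0 udag)
  obtain ⟨r, hRudag⟩ : ∃ r : ℝ, R udag = (r : EReal) :=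
    ⟨(R udag).toReal, (EReal.coe_toReal hfin hRb).symm⟩
  have hr0 : 0 ≤ r := by
    have h := hR0 udag
    rw [hRudag] at h
    exact_mod_cast h
  -- the constant M
  obtain ⟨M, hM1, hMq1⟩ : ∃ M : ℝ, 1 ≤ M ∧ M ^ (q-1) = 2 + 2*c₂*β₂ := by
    refine ⟨(2 + 2*c₂*β₂) ^ (1/(q-1)), ?_, ?_⟩
    · exact Real.one_le_rpow (by nlinarith) (one_div_nonneg.mpr hs0.le)
    · rw [← Real.rpow_mul (by nlinarith), one_div,
        inv_mul_cancel₀ (by linarith : q - 1 ≠ 0), Real.rpow_one]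
  have hM0 : (0:ℝ) < M := by linarith
  -- the constant C
  obtain ⟨C, hC0, hMC, hcoefC⟩ :
      ∃ C : ℝ, 0 < C ∧ M ≤ C ∧ (1/c₁ + β₂*(M+1))/(1-β₁) ≤ C := by
    refine ⟨M + (1/c₁ + β₂*(M+1))/(1-β₁), ?_, ?_, ?_⟩ <;>
    · have h1 : 0 ≤ (1/c₁ + β₂*(M+1))/(1-β₁) :=
        div_nonneg (by nlinarith [one_div_nonneg.mpr hc₁.le]) hβ₁1'.le
      linarith
  -- ε
  have hαρr : αbar * r < ρ := by
    rw [hRudag, ← EReal.coe_mul] at hαρ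
    exact_mod_cast hαρ
  obtain ⟨ε, hεdef, hε0⟩ : ∃ ε : ℝ, ε = ρ - αbar * r ∧ 0 < ε := ⟨_, rfl, by linarith⟩
  -- the constants A and B
  have h2q : (0:ℝ) < (2:ℝ)^q := Real.rpow_pos_of_pos two_pos q
  obtain ⟨A, hAdef, hA0⟩ :
      ∃ A : ℝ, A = (2:ℝ)^q*2 + (2:ℝ)^q*c₂*r ∧ 0 < A :=
    ⟨_, rfl, by linarith [mul_nonneg (mul_nonneg h2q.le hc₂.le) hr0]⟩
  obtain ⟨B, hBdef, hB0⟩ : ∃ B : ℝ, B = αbar/c₁ ∧ 0 < B :=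
    ⟨_, rfl, div_pos hαbar hc₁⟩
  -- the threshold δ₀
  obtain ⟨δ₀, hδ₀0, hδ₀1, hδ₀A, hδ₀B⟩ :
      ∃ δ₀ : ℝ, 0 < δ₀ ∧ δ₀ ≤ 1 ∧ δ₀ ^ (q-1) ≤ ε/(2*A) ∧ δ₀ ≤ ε/(2*B) := by
    refine ⟨min 1 (min ((ε/(2*A)) ^ (1/(q-1))) (ε/(2*B))), ?_, min_le_left _ _, ?_, ?_⟩
    · exact lt_min one_pos (lt_min
        (Real.rpow_pos_of_pos (div_pos hε0 (by linarith)) _)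
        (div_pos hε0 (by linarith)))
    · have h1 : min 1 (min ((ε/(2*A)) ^ (1/(q-1))) (ε/(2*B))) ≤ (ε/(2*A)) ^ (1/(q-1)) :=
        le_trans (min_le_right _ _) (min_le_left _ _)
      have h2 := Real.rpow_le_rpow
        (le_of_lt (lt_min one_pos (lt_min
          (Real.rpow_pos_of_pos (div_pos hε0 (by linarith)) _)
          (div_pos hε0 (by linarith))))) h1 hs0.le
      rwa [← Real.rpow_mul (div_nonneg hε0.le (by linarith)),
        one_div_mul_cancel (by linarith : q - 1 ≠ 0), Real.rpow_one] at h2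
    · exact le_trans (min_le_right _ _) (min_le_right _ _)
  refine ⟨C, hC0, δ₀, hδ₀0, ?_⟩
  intro δ hδ hδδ₀ vδ hvδ uαδ hmin
  have hδ1 : δ ≤ 1 := le_trans hδδ₀ hδ₀1
  obtain ⟨hα1, hα2⟩ := hpc δ hδ
  have hδq1 : (0:ℝ) < δ ^ (q-1) := Real.rpow_pos_of_pos hδ _
  have hδq0 : (0:ℝ) < δ ^ q := Real.rpow_pos_of_pos hδ _
  have hδA : A * δ^(q-1) ≤ ε/2 := by
    have h1 : δ^(q-1) ≤ δ₀^(q-1) := Real.rpow_le_rpow hδ.le hδδ₀ hs0.le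
    have h2 : δ^(q-1) ≤ ε/(2*A) := le_trans h1 hδ₀A
    have h3 : A * δ^(q-1) ≤ A * (ε/(2*A)) := mul_le_mul_of_nonneg_left h2 hA0.le
    have hA0' : A ≠ 0 := ne_of_gt hA0
    have h4 : A * (ε/(2*A)) = ε/2 := by field_simp
    linarith only [h3, h4]
  have hδB : B * δ ≤ ε/2 := by
    have h3 : B * δ ≤ B * (ε/(2*B)) := mul_le_mul_of_nonneg_left (le_trans hδδ₀ hδ₀B) hB0.le
    have hB0' : B ≠ 0 := ne_of_gt hB0
    have h4 : B * (ε/(2*B)) = ε/2 := by field_simp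
    linarith only [h3, h4]
  have hα0 : 0 < αr δ := lt_of_lt_of_le (mul_pos hc₁ hδq1) hα1
  set α : ℝ := αr δ with hαdef
  clear_value α
  set t : ℝ := ‖K uαδ - vδ‖ with htdef
  have ht0 : 0 ≤ t := norm_nonneg _
  clear_value t
  have hδqsplit : δ ^ q = δ ^ (q-1) * δ := by
    nth_rewrite 1 [show q = (q-1) + 1 by ring]
    rw [Real.rpow_add hδ, Real.rpow_one]
  -- Tikhonov value at udag
  have hKud : ‖K udag - vδ‖ ≤ δ := by
    rw [hsol, norm_sub_rev]; exact hvδ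
  have hTud : Tik K R q α vδ udag ≤ ((δ^q + α*r : ℝ) : EReal) := by
    unfold Tik
    rw [hRudag, ← EReal.coe_mul, ← EReal.coe_add, EReal.coe_le_coe_iff]
    have : ‖K udag - vδ‖ ^ q ≤ δ ^ q := Real.rpow_le_rpow (norm_nonneg _) hKud hq0.le
    linarith only [this]
  have hTu : Tik K R q α vδ uαδ ≤ ((δ^q + α*r : ℝ) : EReal) := le_trans (hmin udag) hTud
  -- R uαδ is a real number s ≥ 0
  have hRuT : R uαδ ≠ ⊤ := by
    intro h
    have h2 : ((‖K uαδ - vδ‖^q : ℝ) : EReal) + ⊤ = ⊤ := by simp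
    rw [Tik, h, EReal.coe_mul_top_of_pos hα0, h2, top_le_iff] at hTu
    exact (EReal.coe_ne_top _) hTu
  have hRub : R uαδ ≠ ⊥ := ne_bot_of_le_ne_bot (by simp) (hR0 uαδ)
  obtain ⟨s, hRu⟩ : ∃ s : ℝ, R uαδ = (s : EReal) :=
    ⟨(R uαδ).toReal, (EReal.coe_toReal hRuT hRub).symm⟩
  have hs0' : 0 ≤ s := by
    have h := hR0 uαδ
    rw [hRu] at h
    exact_mod_cast h
  -- main real inequality
  have hmain : t^q + α*s ≤ δ^q + α*r := by
    have h := hTu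
    rw [Tik, hRu, ← EReal.coe_mul, ← EReal.coe_add, EReal.coe_le_coe_iff, ← htdef] at h
    exact h
  -- subgradient inequality, real form
  set e : ℝ := ustar (uαδ - udag) with hedef
  clear_value e
  have hsubr : r + e ≤ s := by
    have h := hsub uαδ
    rw [hRudag, hRu, ← hedef, ← EReal.coe_add, EReal.coe_le_coe_iff] at h
    exact h
  set D : ℝ := s - r - e with hDdef
  clear_value D
  have hD0 : 0 ≤ D := by simp only [hDdef]; linarith
  have hBreg : Bregman R udag ustar uαδ = ((D : ℝ) : EReal) := by
    unfold Bregman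
    rw [hRudag, hRu, ← hedef, ← EReal.coe_sub, ← EReal.coe_sub, hDdef]
  -- norms relative to vdag
  set t' : ℝ := ‖K uαδ - vdag‖ with ht'def
  have ht'0 : 0 ≤ t' := norm_nonneg _
  clear_value t'
  have ht' : t' ≤ t + δ := by
    have h1 : K uαδ - vdag = (K uαδ - vδ) + (vδ - vdag) := by abel
    calc t' = ‖(K uαδ - vδ) + (vδ - vdag)‖ := by rw [ht'def, h1]
    _ ≤ ‖K uαδ - vδ‖ + ‖vδ - vdag‖ := norm_add_le _ _
    _ ≤ t + δ := by rw [← htdef]; linarith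
  -- bound on s
  have hsbound : s ≤ r + δ/c₁ := by
    have h1 : α*(s - r) ≤ δ^(q-1)*δ := by
      linarith only [hmain, hδqsplit, Real.rpow_nonneg ht0 q]
    rcases le_total s r with h | h
    · have h2 : 0 ≤ δ/c₁ := div_nonneg hδ.le hc₁.le
      linarith only [h, h2]
    · have h2 : δ^(q-1)*(c₁*(s-r)) ≤ δ^(q-1)*δ := by
        have h2a := mul_le_mul_of_nonneg_right hα1 (show (0:ℝ) ≤ s - r by linarith only [h])
        linarith only [h1, h2a]
      have h3 : c₁*(s-r) ≤ δ := le_of_mul_le_mul_left h2 hδq1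
      have h4 : s - r ≤ δ/c₁ := by
        rw [le_div_iff₀ hc₁]
        linarith only [h3]
      linarith only [h4]
  -- bound on t^q
  have htq1 : t^q ≤ δ^q + c₂*δ^(q-1)*r := by
    linarith only [hmain, mul_nonneg hα0.le hs0', mul_le_mul_of_nonneg_right hα2 hr0]
  -- sublevel set membership
  have hlevel : Tik K R q αbar vdag uαδ ≤ (ρ : EReal) := by
    have hmax : (t+δ)^q ≤ (2:ℝ)^q*(t^q+δ^q) := by
      have h1 : t + δ ≤ 2 * max t δ := by
        rcases le_total t δ with h | h
        · rw [max_eq_right h]; linarith only [h]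
        · rw [max_eq_left h]; linarith only [h]
      have h2 : (t+δ)^q ≤ (2*max t δ)^q :=
        Real.rpow_le_rpow (add_nonneg ht0 hδ.le) h1 hq0.le
      have h3 : (2*max t δ)^q = (2:ℝ)^q * (max t δ)^q :=
        Real.mul_rpow (by norm_num) (le_max_of_le_left ht0)
      have h4 : (max t δ)^q ≤ t^q + δ^q := by
        rcases le_total t δ with h | h
        · rw [max_eq_right h]
          exact le_add_of_nonneg_left (Real.rpow_nonneg ht0 q)
        · rw [max_eq_left h]
          exact le_add_of_nonneg_right (Real.rpow_nonneg hδ.le q)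
      calc (t+δ)^q ≤ (2*max t δ)^q := h2
      _ = (2:ℝ)^q * (max t δ)^q := h3
      _ ≤ (2:ℝ)^q * (t^q + δ^q) := mul_le_mul_of_nonneg_left h4 h2q.le
    have hδqq1 : δ^q ≤ δ^(q-1) := Real.rpow_le_rpow_of_exponent_ge hδ hδ1 (by linarith)
    have hreal : t'^q + αbar*s ≤ ρ := by
      have h5 : t'^q ≤ (t+δ)^q := Real.rpow_le_rpow ht'0 ht' hq0.le
      have h6 : t'^q ≤ (2:ℝ)^q*(2*δ^q + c₂*δ^(q-1)*r) := by
        have := mul_le_mul_of_nonneg_left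
          (show t^q + δ^q ≤ 2*δ^q + c₂*δ^(q-1)*r by linarith only [htq1]) h2q.le
        linarith only [h5, hmax, this]
      have h7 : αbar*s ≤ αbar*r + B*δ := by
        have h7a : αbar*s ≤ αbar*(r + δ/c₁) := mul_le_mul_of_nonneg_left hsbound hαbar.le
        have h7b : αbar*(r + δ/c₁) = αbar*r + (αbar/c₁)*δ := by field_simp
        rw [hBdef]
        linarith only [h7a, h7b]
      have h8 : (2:ℝ)^q*(2*δ^q + c₂*δ^(q-1)*r) ≤ A * δ^(q-1) := by
        rw [hAdef]
        have := mul_le_mul_of_nonneg_left hδqq1 (show (0:ℝ) ≤ (2:ℝ)^q*2 by positivity)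
        linarith only [this]
      have h9 : ε = ρ - αbar*r := hεdef
      linarith only [h6, h7, h8, hδA, hδB, h9]
    unfold Tik
    rw [hRu, ← EReal.coe_mul, ← EReal.coe_add, EReal.coe_le_coe_iff, ← ht'def]
    exact hreal
  -- source condition, real form
  have hscr : -e ≤ β₁*D + β₂*t' := by
    have h := hsc uαδ hlevel
    rw [hBreg, ← EReal.coe_mul, ← EReal.coe_add, EReal.coe_le_coe_iff, ← ht'def] at h
    have he' : (ustar (udag - uαδ) : ℝ) = -e := by
      rw [hedef, ← map_neg]
      congr 1
      abel
    rw [he'] at h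
    exact h
  -- combined inequality
  have hcomb : t^q + α*(1-β₁)*D ≤ δ^q + α*β₂*t + α*β₂*δ := by
    have h1 : α*(-e) ≤ α*(β₁*D + β₂*t') := mul_le_mul_of_nonneg_left hscr hα0.le
    have h2 : α*β₂*t' ≤ α*β₂*(t+δ) := by
      have := mul_le_mul_of_nonneg_left ht' (mul_nonneg hα0.le hβ₂.le)
      linarith only [this]
    have h3 : α*s = α*r + α*D + α*e := by rw [hDdef]; ring
    linarith only [hmain, h1, h2, h3]
  -- the bound t ≤ M δ
  have htM : t ≤ M*δ := by
    by_contra hcon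
    push_neg at hcon
    have htpos : 0 < t := lt_of_le_of_lt (mul_nonneg hM0.le hδ.le) hcon
    have htq : t^q ≤ (1+c₂*β₂)*δ^q + c₂*β₂*δ^(q-1)*t := by
      have hd1 : 0 ≤ α*(1-β₁)*D := mul_nonneg (mul_nonneg hα0.le hβ₁1'.le) hD0
      have hd2 : α*β₂*t ≤ c₂*δ^(q-1)*β₂*t := by
        have := mul_le_mul_of_nonneg_right hα2 (mul_nonneg hβ₂.le ht0)
        linarith only [this]
      have hd3 : α*β₂*δ ≤ c₂*β₂*δ^q := by
        have h' := mul_le_mul_of_nonneg_right hα2 (mul_nonneg hβ₂.le hδ.le)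
        have h'' : c₂*β₂*δ^q = c₂*β₂*(δ^(q-1)*δ) := by rw [hδqsplit]
        linarith only [h', h'']
      linarith only [hcomb, hd1, hd2, hd3]
    have hMδ : M*δ ≤ t := hcon.le
    have hMδq : M^q*δ^q ≤ t^q := by
      have h := Real.rpow_le_rpow (mul_nonneg hM0.le hδ.le) hMδ hq0.le
      rwa [Real.mul_rpow hM0.le hδ.le] at h
    have hMδq1 : M^(q-1)*δ^(q-1) ≤ t^(q-1) := by
      have h := Real.rpow_le_rpow (mul_nonneg hM0.le hδ.le) hMδ hs0.le
      rwa [Real.mul_rpow hM0.le hδ.le] at h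
    have htqsplit : t^q = t^(q-1)*t := by
      nth_rewrite 1 [show q = (q-1) + 1 by ring]
      rw [Real.rpow_add htpos, Real.rpow_one]
    have htqpos : 0 < t^q := Real.rpow_pos_of_pos htpos q
    have hN0 : (0:ℝ) < M^(q-1) := Real.rpow_pos_of_pos hM0 _
    have hNδq : M^(q-1)*δ^q ≤ t^q := by
      have h1 : M^(q-1) ≤ M^q := Real.rpow_le_rpow_of_exponent_le hM1 (by linarith)
      have := mul_le_mul_of_nonneg_right h1 hδq0.le
      linarith only [hMδq, this]
    have hfin' : M^(q-1)*t^q ≤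
        (1+c₂*β₂)*(M^(q-1)*δ^q) + c₂*β₂*((M^(q-1)*δ^(q-1))*t) := by
      have := mul_le_mul_of_nonneg_left htq hN0.le
      linarith only [this]
    have hMt : M^(q-1)*t^q = (2+2*c₂*β₂)*t^q := by rw [hMq1]
    have hh1 : (1+c₂*β₂)*(M^(q-1)*δ^q) ≤ (1+c₂*β₂)*t^q :=
      mul_le_mul_of_nonneg_left hNδq
        (add_nonneg zero_le_one (mul_nonneg hc₂.le hβ₂.le))
    have hh2 : c₂*β₂*((M^(q-1)*δ^(q-1))*t) ≤ c₂*β₂*(t^(q-1)*t) :=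
      mul_le_mul_of_nonneg_left (mul_le_mul_of_nonneg_right hMδq1 ht0)
        (mul_nonneg hc₂.le hβ₂.le)
    have hh3 : c₂*β₂*(t^(q-1)*t) = c₂*β₂*t^q := by rw [← htqsplit]
    linarith only [hfin', hMt, hh1, hh2, hh3, htqpos]
  -- the bound on D
  have hDbound : D ≤ C*δ := by
    have h1 : δ^q ≤ (α/c₁)*δ := by
      have h1a : δ^(q-1) ≤ α/c₁ := by
        rw [le_div_iff₀ hc₁]
        linarith only [hα1]
      have := mul_le_mul_of_nonneg_right h1a hδ.le
      linarith only [this, hδqsplit]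
    have h2 : α*((1-β₁)*D) ≤ α*((1/c₁ + β₂*(M+1))*δ) := by
      have h3 : α*β₂*t ≤ α*β₂*(M*δ) := by
        have := mul_le_mul_of_nonneg_left htM (mul_nonneg hα0.le hβ₂.le)
        linarith only [this]
      have h4 : (α/c₁)*δ = α*(1/c₁)*δ := by ring
      have h5 : 0 ≤ t^q := Real.rpow_nonneg ht0 q
      linarith only [hcomb, h1, h3, h4, h5]
    have h6 : (1-β₁)*D ≤ (1/c₁ + β₂*(M+1))*δ := le_of_mul_le_mul_left h2 hα0
    have h7 : D ≤ ((1/c₁ + β₂*(M+1))/(1-β₁))*δ := by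
      rw [div_mul_eq_mul_div, le_div_iff₀ hβ₁1']
      linarith only [h6]
    linarith only [h7, mul_le_mul_of_nonneg_right hcoefC hδ.le]
  constructor
  · rw [hBreg, EReal.coe_le_coe_iff]
    exact hDbound
  · calc t ≤ M*δ := htM
    _ ≤ C*δ := mul_le_mul_of_nonneg_right hMC hδ.le
end

section
/- Convergence rates for generalized (W-)Bregman distances, case q > 1: let u† be an R-minimizing solution of K(u) = v†, and let w : U → ℝ be a generalized subgradient of R at u†, i.e. R(v) ≥ R(u†) + w(v) − w(u†) for all v ∈ U. Suppose there exist constants β₁ ∈ [0,1) and ᾱ, β₂, ρ > 0 with ᾱ·R(u†) < ρ such that w(u†) − w(u) ≤ β₁·D_w(u; u†) + β₂·‖K(u) − v†‖ holds for all u with T_ᾱ(u; v†) ≤ ρ. Assume the parameter choice satisfies c₁δ^{q−1} ≤ α(δ) ≤ c₂δ^{q−1} for constants c₁, c₂ > 0. Then there exist C > 0 and δ₀ > 0 such that for all 0 < δ ≤ δ₀, all data v^δ with ‖v^δ − v†‖ ≤ δ, and every minimizer u_α^δ of T_{α(δ)}(·; v^δ), one has D_w(u_α^δ; u†) ≤ Cδ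 and ‖K(u_α^δ) − v^δ‖ ≤ Cδ. -/
/-- The generalized (W-)Bregman distance `D_w(v; u†) = R(v) − R(u†) − (w(v) − w(u†))`
associated to `R`, a point `u†` and a (generally nonlinear) function `w : U → ℝ`. -/
noncomputable def WBregman {U : Type*}
    (R : U → EReal) (udag : U) (w : U → ℝ) (v : U) : EReal :=
  R v - R udag - ((w v - w udag : ℝ) : EReal)

set_option maxHeartbeats 1000000 in
/-- Convergence rates for generalized (W-)Bregman distances, `q > 1`: if
`w : U → ℝ` is a generalized subgradient of `R` at an `R`-minimizing solution `u†`, the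
source condition `w(u†) − w(u) ≤ β₁ D_w(u; u†) + β₂ ‖K u − v†‖` holds on the sublevel
set `{u : T_ᾱ(u; v†) ≤ ρ}`, and `α(δ) ∼ δ^{q−1}`, then `D_w(u_α^δ; u†) = O(δ)` and
`‖K(u_α^δ) − v^δ‖ = O(δ)`. -/
theorem tikhonov_convergence_rates_WBregman_q_gt_one
    {U V : Type*} [NormedAddCommGroup U] [NormedSpace ℝ U] [CompleteSpace U]
    [NormedAddCommGroup V] [NormedSpace ℝ V] [CompleteSpace V]
    (K : U → V) (R : U → EReal) (hR0 : ∀ u, 0 ≤ R u)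
    (q : ℝ) (hq : 1 < q)
    (vdag : V) (udag : U)
    -- u† is an R-minimizing solution with finite R-value
    (hsol : K udag = vdag) (hRmin : ∀ u : U, K u = vdag → R udag ≤ R u)
    (hfin : R udag ≠ ⊤)
    -- w is a generalized subgradient of R at u†
    (w : U → ℝ)
    (hsub : ∀ v : U, R udag + ((w v - w udag : ℝ) : EReal) ≤ R v)
    -- the source condition
    (β₁ : ℝ) (hβ₁0 : 0 ≤ β₁) (hβ₁1 : β₁ < 1)
    (αbar β₂ ρ : ℝ) (hαbar : 0 < αbar) (hβ₂ : 0 < β₂) (hρ : 0 < ρ)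
    (hαρ : (αbar : EReal) * R udag < (ρ : EReal))
    (hsc : ∀ u : U, Tik K R q αbar vdag u ≤ (ρ : EReal) →
      ((w udag - w u : ℝ) : EReal) ≤
        (β₁ : EReal) * WBregman R udag w u + ((β₂ * ‖K u - vdag‖ : ℝ) : EReal))
    -- the parameter choice rule α(δ) ∼ δ^{q−1}
    (αr : ℝ → ℝ) (c₁ c₂ : ℝ) (hc₁ : 0 < c₁) (hc₂ : 0 < c₂)
    (hpc : ∀ δ : ℝ, 0 < δ → c₁ * δ ^ (q - 1) ≤ αr δ ∧ αr δ ≤ c₂ * δ ^ (q - 1)) :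
    ∃ C : ℝ, 0 < C ∧ ∃ δ₀ : ℝ, 0 < δ₀ ∧
      ∀ δ : ℝ, 0 < δ → δ ≤ δ₀ → ∀ vδ : V, ‖vδ - vdag‖ ≤ δ →
        ∀ uαδ : U,
          (∀ u : U, Tik K R q (αr δ) vδ uαδ ≤ Tik K R q (αr δ) vδ u) →
          WBregman R udag w uαδ ≤ ((C * δ : ℝ) : EReal) ∧
          ‖K uαδ - vδ‖ ≤ C * δ := by
  have hq1 : 0 < q - 1 := by linarith
  have hq0 : 0 < q := by linarith
  -- real value of R at u†
  have hbotdag : R udag ≠ ⊥ := by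
    intro h
    have := hR0 udag
    rw [h] at this
    simp at this
  obtain ⟨r, hrcoe⟩ : ∃ r : ℝ, (r : EReal) = R udag := ⟨_, EReal.coe_toReal hfin hbotdag⟩
  have hr0 : 0 ≤ r := by
    have := hR0 udag
    rw [← hrcoe] at this
    exact_mod_cast this
  have hαρ' : αbar * r < ρ := by
    rw [← hrcoe, ← EReal.coe_mul] at hαρ
    exact_mod_cast hαρ
  -- the constant M
  obtain ⟨M, hMpos, hM1, hMq⟩ :
      ∃ M : ℝ, 0 < M ∧ 1 ≤ M ∧ M ^ (q - 1) = 2 * (1 + 2 * c₂ * β₂) := by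
    have hbase : (1 : ℝ) < 2 * (1 + 2 * c₂ * β₂) := by linarith only [mul_pos hc₂ hβ₂]
    refine ⟨(2 * (1 + 2 * c₂ * β₂)) ^ (1 / (q - 1)),
      Real.rpow_pos_of_pos (by linarith) _, ?_, ?_⟩
    · by_contra h
      push_neg at h
      have h2 := Real.rpow_le_one (Real.rpow_pos_of_pos (by linarith) _).le h.le hq1.le
      rw [← Real.rpow_mul (by linarith), one_div, inv_mul_cancel₀ hq1.ne',
        Real.rpow_one] at h2
      linarith
    · rw [← Real.rpow_mul (by linarith), one_div, inv_mul_cancel₀ hq1.ne', Real.rpow_one]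
  -- the constant C₀
  obtain ⟨C₀, hC₀pos, hC₀eq⟩ :
      ∃ C₀ : ℝ, 0 < C₀ ∧ C₀ * (c₁ * (1 - β₁)) = 1 + c₂ * β₂ * (M + 1) := by
    have hc : (0:ℝ) < c₁ * (1 - β₁) := mul_pos hc₁ (by linarith only [hβ₁1])
    have hnum : (0:ℝ) < 1 + c₂ * β₂ * (M + 1) := by
      linarith only [mul_pos (mul_pos hc₂ hβ₂) (show (0:ℝ) < M + 1 by linarith only [hMpos])]
    exact ⟨(1 + c₂ * β₂ * (M + 1)) / (c₁ * (1 - β₁)), div_pos hnum hc,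
      div_mul_cancel₀ _ hc.ne'⟩
  obtain ⟨ε, hεpos, hεdef⟩ : ∃ ε : ℝ, 0 < ε ∧ ε = ρ - αbar * r :=
    ⟨_, by linarith only [hαρ'], rfl⟩
  -- the constant A
  obtain ⟨A, hApos, hAeq⟩ : ∃ A : ℝ, 0 < A ∧ A = 2 ^ q * (2 + c₂ * r) := by
    refine ⟨_, ?_, rfl⟩
    exact mul_pos (Real.rpow_pos_of_pos (by norm_num) _)
      (by linarith only [mul_nonneg hc₂.le hr0])
  -- the threshold δ₁
  obtain ⟨δ₁, hδ₁pos, hδ₁pow⟩ : ∃ d : ℝ, 0 < d ∧ d ^ (q - 1) = ε / (2 * A) := by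
    refine ⟨(ε / (2 * A)) ^ (1 / (q - 1)), Real.rpow_pos_of_pos (by positivity) _, ?_⟩
    rw [← Real.rpow_mul (by positivity), one_div, inv_mul_cancel₀ hq1.ne', Real.rpow_one]
  obtain ⟨δ₂, hδ₂pos, hδ₂def⟩ : ∃ d : ℝ, 0 < d ∧ d = ε * c₁ / (2 * αbar) :=
    ⟨_, by positivity, rfl⟩
  refine ⟨max M C₀, lt_max_iff.2 (Or.inl hMpos), min 1 (min δ₁ δ₂),
    lt_min one_pos (lt_min hδ₁pos hδ₂pos), ?_⟩
  intro δ hδ hδ0 vδ hvδ u hmin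
  have hδ1 : δ ≤ 1 := hδ0.trans (min_le_left _ _)
  have hδδ₁ : δ ≤ δ₁ := hδ0.trans ((min_le_right _ _).trans (min_le_left _ _))
  have hδδ₂ : δ ≤ δ₂ := hδ0.trans ((min_le_right _ _).trans (min_le_right _ _))
  obtain ⟨hα1, hα2⟩ := hpc δ hδ
  set α := αr δ with hαdef
  have hδq1 : 0 < δ ^ (q - 1) := Real.rpow_pos_of_pos hδ _
  have hαpos : 0 < α := lt_of_lt_of_le (by positivity) hα1
  set t := ‖K u - vδ‖ with htdef
  have ht0 : 0 ≤ t := norm_nonneg _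
  have hδqe : δ ^ (q - 1) * δ = δ ^ q := by
    have h := (Real.rpow_add hδ (q - 1) 1).symm
    rw [Real.rpow_one] at h
    rw [h]
    congr 1
    ring
  -- minimality against u†
  have hmin1 := hmin udag
  simp only [Tik, hsol] at hmin1
  -- R u is finite
  have hRutop : R u ≠ ⊤ := by
    intro h
    rw [h, EReal.coe_mul_top_of_pos hαpos, EReal.coe_add_top, ← hrcoe,
      ← EReal.coe_mul, ← EReal.coe_add] at hmin1
    exact (EReal.coe_ne_top _) (top_le_iff.mp hmin1)
  have hRubot : R u ≠ ⊥ := by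
    intro h
    have := hR0 u
    rw [h] at this
    simp at this
  obtain ⟨Ru, hRucoe⟩ : ∃ x : ℝ, (x : EReal) = R u := ⟨_, EReal.coe_toReal hRutop hRubot⟩
  have hRu0 : 0 ≤ Ru := by
    have := hR0 u
    rw [← hRucoe] at this
    exact_mod_cast this
  rw [← hrcoe, ← hRucoe, ← EReal.coe_mul, ← EReal.coe_mul, ← EReal.coe_add,
    ← EReal.coe_add, EReal.coe_le_coe_iff] at hmin1
  -- hmin1 : t ^ q + α * Ru ≤ ‖vdag - vδ‖ ^ q + α * r
  have hnd : ‖vdag - vδ‖ ≤ δ := by rw [norm_sub_rev]; exact hvδ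
  have hndq : ‖vdag - vδ‖ ^ q ≤ δ ^ q := Real.rpow_le_rpow (norm_nonneg _) hnd hq0.le
  have key0 : t ^ q + α * Ru ≤ δ ^ q + α * r := by linarith only [hmin1, hndq, hαpos]
  have htqnn : 0 ≤ t ^ q := Real.rpow_nonneg ht0 q
  -- Bregman distance as a real number
  have hsubu := hsub u
  rw [← hrcoe, ← hRucoe, ← EReal.coe_add, EReal.coe_le_coe_iff] at hsubu
  set D : ℝ := Ru - r - (w u - w udag) with hDdef
  have hD0 : 0 ≤ D := by simp only [hDdef]; linarith only [hsubu]
  have hWB : WBregman R udag w u = ((D : ℝ) : EReal) := by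
    simp only [WBregman, ← hrcoe, ← hRucoe, ← EReal.coe_sub, hDdef]
  -- bound on Ru
  have hRub : Ru ≤ δ / c₁ + r := by
    rcases le_or_gt Ru r with h | h
    · have h0 : 0 ≤ δ / c₁ := by positivity
      linarith only [h, h0]
    · have h1 : α * (Ru - r) ≤ δ ^ (q - 1) * δ := by
        linarith only [key0, htqnn, hδqe]
      have h2 : c₁ * δ ^ (q - 1) * (Ru - r) ≤ α * (Ru - r) :=
        mul_le_mul_of_nonneg_right hα1 (by linarith only [h])
      have h3 : c₁ * (Ru - r) ≤ δ := by
        refine le_of_mul_le_mul_left ?_ hδq1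
        linarith only [h1, h2]
      have h4 : Ru - r ≤ δ / c₁ := (le_div_iff₀ hc₁).mpr (by linarith only [h3])
      linarith only [h4]
  -- bound on ‖K u − v†‖
  have h1 : ‖K u - vdag‖ ≤ t + δ := by
    have heq : K u - vdag = (K u - vδ) + (vδ - vdag) := by abel
    rw [heq]
    exact (norm_add_le _ _).trans (by linarith only [hvδ])
  -- t^q is small
  have htq : t ^ q ≤ δ ^ q + α * r := by
    linarith only [key0, mul_nonneg hαpos.le hRu0]
  have hδqδ : δ ^ q ≤ δ ^ (q - 1) := by
    have h2 := mul_le_mul_of_nonneg_left hδ1 hδq1.le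
    rw [mul_one] at h2
    linarith only [h2, hδqe]
  have htq1 : t ^ q ≤ (1 + c₂ * r) * δ ^ (q - 1) := by
    have h2 : α * r ≤ c₂ * δ ^ (q - 1) * r := mul_le_mul_of_nonneg_right hα2 hr0
    linarith only [htq, hδqδ, h2]
  -- (t+δ)^q bound
  have hsum : (t + δ) ^ q ≤ 2 ^ q * (t ^ q + δ ^ q) := by
    have hmx : t + δ ≤ 2 * max t δ := by
      have h1 := le_max_left t δ
      have h2 := le_max_right t δ
      linarith only [h1, h2]
    calc (t + δ) ^ q ≤ (2 * max t δ) ^ q :=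
          Real.rpow_le_rpow (by positivity) hmx hq0.le
      _ = 2 ^ q * (max t δ) ^ q := Real.mul_rpow (by norm_num) (le_max_of_le_left ht0)
      _ ≤ 2 ^ q * (t ^ q + δ ^ q) := by
          apply mul_le_mul_of_nonneg_left _ (Real.rpow_nonneg (by norm_num) q)
          rcases max_cases t δ with ⟨h, _⟩ | ⟨h, _⟩ <;> rw [h]
          · linarith only [Real.rpow_nonneg hδ.le q]
          · linarith only [htqnn]
  -- the sublevel condition
  have hδ₁q : δ ^ (q - 1) ≤ ε / (2 * A) := by
    have h2 := Real.rpow_le_rpow hδ.le hδδ₁ hq1.le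
    rwa [hδ₁pow] at h2
  have hsl : Tik K R q αbar vdag u ≤ (ρ : EReal) := by
    simp only [Tik, ← hRucoe, ← EReal.coe_mul, ← EReal.coe_add, EReal.coe_le_coe_iff]
    have h2 : ‖K u - vdag‖ ^ q ≤ (t + δ) ^ q := Real.rpow_le_rpow (norm_nonneg _) h1 hq0.le
    have hAδ : (t + δ) ^ q ≤ A * δ ^ (q - 1) := by
      calc (t + δ) ^ q ≤ 2 ^ q * (t ^ q + δ ^ q) := hsum
        _ ≤ 2 ^ q * ((1 + c₂ * r) * δ ^ (q - 1) + δ ^ (q - 1)) := by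
            apply mul_le_mul_of_nonneg_left _ (Real.rpow_nonneg (by norm_num) q)
            linarith only [htq1, hδqδ]
        _ = A * δ ^ (q - 1) := by rw [hAeq]; ring
    have hAd2 : A * δ ^ (q - 1) ≤ ε / 2 := by
      calc A * δ ^ (q - 1) ≤ A * (ε / (2 * A)) := mul_le_mul_of_nonneg_left hδ₁q hApos.le
        _ = ε / 2 := by field_simp
    have hαδ : αbar * (δ / c₁) ≤ ε / 2 := by
      rw [hδ₂def] at hδδ₂
      have h3 : αbar * δ ≤ αbar * (ε * c₁ / (2 * αbar)) :=
        mul_le_mul_of_nonneg_left hδδ₂ hαbar.le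
      have h4 : αbar * (ε * c₁ / (2 * αbar)) = ε * c₁ / 2 := by field_simp
      rw [h4] at h3
      rw [mul_div_assoc', div_le_div_iff₀ hc₁ (by norm_num : (0:ℝ) < 2)]
      linarith only [h3]
    have hfinal : αbar * Ru ≤ αbar * (δ / c₁ + r) := mul_le_mul_of_nonneg_left hRub hαbar.le
    have hdist : αbar * (δ / c₁ + r) = αbar * (δ / c₁) + αbar * r := by ring
    simp only [hεdef] at hAd2 hαδ
    linarith only [h2, hAδ, hAd2, hαδ, hfinal, hdist]
  -- apply the source condition
  have hsc2 : w udag - w u ≤ β₁ * D + β₂ * (t + δ) := by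
    have hsc' := hsc u hsl
    rw [hWB, ← EReal.coe_mul, ← EReal.coe_add, EReal.coe_le_coe_iff] at hsc'
    linarith only [hsc', mul_le_mul_of_nonneg_left h1 hβ₂.le]
  -- main inequality
  have key1 : t ^ q + α * (1 - β₁) * D ≤ δ ^ q + α * β₂ * (t + δ) := by
    have hRuD : α * Ru = α * D + α * r + α * (w u - w udag) := by
      simp only [hDdef]; ring
    linarith only [key0, hRuD, mul_le_mul_of_nonneg_left hsc2 hαpos.le]
  -- Step 1: t ≤ M δ
  have htM : t ≤ M * δ := by
    by_contra hcon
    push_neg at hcon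
    have htpos : 0 < t := lt_of_le_of_lt (by positivity) hcon
    have htq1pos : 0 < t ^ (q - 1) := Real.rpow_pos_of_pos htpos _
    have htqpos : 0 < t ^ q := Real.rpow_pos_of_pos htpos _
    have hδle : δ ≤ t := by
      have h2 : 0 ≤ (M - 1) * δ := mul_nonneg (by linarith only [hM1]) hδ.le
      linarith only [hcon, h2]
    have e5 : t ^ (q - 1) * t = t ^ q := by
      have h := (Real.rpow_add htpos (q - 1) 1).symm
      rw [Real.rpow_one] at h
      rw [h]
      congr 1
      ring
    have e8 : t + δ ≤ 2 * t := by linarith only [hδle]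
    have e7 : t ^ q ≤ δ ^ q + c₂ * δ ^ (q - 1) * β₂ * (t + δ) := by
      have ha : 0 ≤ α * (1 - β₁) * D :=
        mul_nonneg (mul_nonneg hαpos.le (by linarith only [hβ₁1])) hD0
      have hb := mul_le_mul_of_nonneg_right hα2 (by positivity : (0:ℝ) ≤ β₂ * (t + δ))
      linarith only [key1, ha, hb]
    have g2 : M ^ (q - 1) * δ ^ (q - 1) ≤ t ^ (q - 1) := by
      have h := Real.rpow_le_rpow (by positivity) hcon.le hq1.le
      rwa [Real.mul_rpow hMpos.le hδ.le] at h
    have hm0 : 0 < M ^ (q - 1) := Real.rpow_pos_of_pos hMpos _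
    have g1 : M ^ (q - 1) * δ ^ q ≤ t ^ q := by
      calc M ^ (q - 1) * δ ^ q = (M ^ (q - 1) * δ ^ (q - 1)) * δ := by rw [← hδqe]; ring
        _ ≤ t ^ (q - 1) * δ := mul_le_mul_of_nonneg_right g2 hδ.le
        _ ≤ t ^ (q - 1) * t := mul_le_mul_of_nonneg_left hδle htq1pos.le
        _ = t ^ q := e5
    have g3 : M ^ (q - 1) * (c₂ * δ ^ (q - 1) * β₂ * (t + δ)) ≤ 2 * c₂ * β₂ * t ^ q := by
      have h2 : (c₂ * β₂ * (t + δ)) * (M ^ (q - 1) * δ ^ (q - 1)) ≤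
          (c₂ * β₂ * (2 * t)) * t ^ (q - 1) := by
        apply mul_le_mul _ g2 (by positivity) (by positivity)
        exact mul_le_mul_of_nonneg_left e8 (mul_nonneg hc₂.le hβ₂.le)
      calc M ^ (q - 1) * (c₂ * δ ^ (q - 1) * β₂ * (t + δ))
          = (c₂ * β₂ * (t + δ)) * (M ^ (q - 1) * δ ^ (q - 1)) := by ring
        _ ≤ (c₂ * β₂ * (2 * t)) * t ^ (q - 1) := h2
        _ = 2 * c₂ * β₂ * (t ^ (q - 1) * t) := by ring
        _ = 2 * c₂ * β₂ * t ^ q := by rw [e5]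
    have g4 : M ^ (q - 1) * t ^ q ≤ M ^ (q - 1) * δ ^ q
        + M ^ (q - 1) * (c₂ * δ ^ (q - 1) * β₂ * (t + δ)) := by
      have h := mul_le_mul_of_nonneg_left e7 hm0.le
      rw [mul_add] at h
      exact h
    have g5 : M ^ (q - 1) * t ^ q ≤ (1 + 2 * c₂ * β₂) * t ^ q := by
      linarith only [g1, g3, g4]
    rw [hMq] at g5
    have hpos2 : 0 < (1 + 2 * c₂ * β₂) * t ^ q :=
      mul_pos (by linarith only [mul_pos hc₂ hβ₂]) htqpos
    linarith only [g5, hpos2]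
  -- Step 2: D ≤ C₀ δ
  have hDb : D ≤ C₀ * δ := by
    have k1 : α * (1 - β₁) * D ≤ δ ^ (q - 1) * δ * (1 + c₂ * β₂ * (M + 1)) := by
      have ha := mul_le_mul_of_nonneg_left
        (show t + δ ≤ (M + 1) * δ by linarith only [htM]) (mul_nonneg hαpos.le hβ₂.le)
      have hb := mul_le_mul_of_nonneg_right hα2
        (by positivity : (0:ℝ) ≤ β₂ * ((M + 1) * δ))
      linarith only [key1, hδqe, ha, hb, htqnn]
    have k2 : c₁ * δ ^ (q - 1) * ((1 - β₁) * D) ≤ α * ((1 - β₁) * D) :=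
      mul_le_mul_of_nonneg_right hα1 (mul_nonneg (by linarith only [hβ₁1]) hD0)
    have k3 : c₁ * ((1 - β₁) * D) ≤ δ * (1 + c₂ * β₂ * (M + 1)) := by
      refine le_of_mul_le_mul_left ?_ hδq1
      linarith only [k1, k2]
    have hcpos : 0 < c₁ * (1 - β₁) := mul_pos hc₁ (by linarith only [hβ₁1])
    have heqδ : C₀ * (c₁ * (1 - β₁)) * δ = (1 + c₂ * β₂ * (M + 1)) * δ := by
      rw [hC₀eq]
    refine le_of_mul_le_mul_left ?_ hcpos
    linarith only [k3, heqδ]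
  constructor
  · rw [hWB, EReal.coe_le_coe_iff]
    have hMC : 0 ≤ (max M C₀ - C₀) * δ :=
      mul_nonneg (by linarith only [le_max_right M C₀]) hδ.le
    linarith only [hDb, hMC]
  · have hMC : 0 ≤ (max M C₀ - M) * δ :=
      mul_nonneg (by linarith only [le_max_left M C₀]) hδ.le
    linarith only [htM, hMC]
end

section
/- The function f : ℝ^{2×2} → ℝ defined by f(A) = σ₁(A)^p + σ₂(A)^p + p·exp(1 − det A), with p > 2, is polyconvex: there exists a convex function F : ℝ^{2×2} × ℝ → ℝ such that f(A) = F(A, det A) for every A ∈ ℝ^{2×2}. -/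
open Matrix
/-- The larger singular value `σ₁(A)` of a real 2×2 matrix `A`: the square root of the
larger eigenvalue of `AᵀA` (whose eigenvalues are the roots of
`λ² − tr(AᵀA) λ + (det A)²`). -/
noncomputable def sval1 (A : Matrix (Fin 2) (Fin 2) ℝ) : ℝ :=
  Real.sqrt ((Matrix.trace (Aᵀ * A) +
    Real.sqrt ((Matrix.trace (Aᵀ * A)) ^ 2 - 4 * A.det ^ 2)) / 2)

/-- The smaller singular value `σ₂(A)` of a real 2×2 matrix `A`. -/
noncomputable def sval2 (A : Matrix (Fin 2) (Fin 2) ℝ) : ℝ :=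
  Real.sqrt ((Matrix.trace (Aᵀ * A) -
    Real.sqrt ((Matrix.trace (Aᵀ * A)) ^ 2 - 4 * A.det ^ 2)) / 2)

/-- The registration regularizer integrand
`f(A) = σ₁(A)^p + σ₂(A)^p + p·exp(1 − det A)`. -/
noncomputable def freg (p : ℝ) (A : Matrix (Fin 2) (Fin 2) ℝ) : ℝ :=
  sval1 A ^ p + sval2 A ^ p + p * Real.exp (1 - A.det)

/-!
Write `A = [[a, b], [c, d]]` and let `u`, `v` be the Euclidean norms of its conformal part
`(a + d, b - c)` and anticonformal part `(a - d, b + c)`. Then `tr (AᵀA) = (u² + v²)/2` and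
`det A = (u² - v²)/4`, so `σ₁ = (u + v)/2` and `σ₂ = |u - v|/2`, i.e. `σ₁^p + σ₂^p = G (u, v)` with
`G (x, y) = |(x + y)/2|^p + |(x - y)/2|^p`. For `p ≥ 1`, `G` is convex, and since it is also even
in each variable it is monotone on the positive quadrant. As `u` and `v` are norms of linear
maps, they are convex, hence so is `G (u, v)`. The determinant enters only through the convex
function `t ↦ p·exp (1 - t)`.
-/

open Set

section Convexity

variable {𝕜 E F β γ : Type*} [Semiring 𝕜] [PartialOrder 𝕜] [AddCommMonoid E] [AddCommMonoid F]
  [AddCommMonoid β] [PartialOrder β] [AddCommMonoid γ] [PartialOrder γ]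

theorem ConvexOn.comp_of_mapsTo [SMul 𝕜 E] [SMul 𝕜 β] [SMul 𝕜 γ] {s : Set E} {t : Set β}
    {f : E → β} {g : β → γ} (hg : ConvexOn 𝕜 t g) (hf : ConvexOn 𝕜 s f)
    (hg' : MonotoneOn g t) (hst : MapsTo f s t) : ConvexOn 𝕜 s (g ∘ f) :=
  ⟨hf.1, fun _ hx _ hy _ _ ha hb hab =>
    (hg' (hst (hf.1 hx hy ha hb hab)) (hg.1 (hst hx) (hst hy) ha hb hab)
      (hf.2 hx hy ha hb hab)).trans (hg.2 (hst hx) (hst hy) ha hb hab)⟩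

theorem ConvexOn.prodMk [SMul 𝕜 E] [SMul 𝕜 β] [SMul 𝕜 γ] {s : Set E} {f : E → β} {g : E → γ}
    (hf : ConvexOn 𝕜 s f) (hg : ConvexOn 𝕜 s g) : ConvexOn 𝕜 s fun x => (f x, g x) :=
  ⟨hf.1, fun _ hx _ hy _ _ ha hb hab =>
    Prod.mk_le_mk.2 ⟨hf.2 hx hy ha hb hab, hg.2 hx hy ha hb hab⟩⟩

theorem ConvexOn.comp_prodMk_left [SMul 𝕜 E] [Module 𝕜 F] [SMul 𝕜 β] {f : E × F → β}
    (hf : ConvexOn 𝕜 univ f) (y : F) : ConvexOn 𝕜 univ fun x => f (x, y) :=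
  ⟨convex_univ, fun x _ x' _ a b ha hb hab => by
    simpa [Prod.smul_mk, Convex.combo_self hab] using
      hf.2 (mem_univ (x, y)) (mem_univ (x', y)) ha hb hab⟩

end Convexity

theorem ConvexOn.monotoneOn_Ici_of_even {f : ℝ → ℝ} (hf : ConvexOn ℝ univ f)
    (heven : f.Even) : MonotoneOn f (Ici 0) := by
  intro x hx y _ hxy
  have hseg : x ∈ segment ℝ (-y) y := by
    rw [segment_eq_Icc (by linarith [mem_Ici.1 hx])]
    exact ⟨by linarith [mem_Ici.1 hx], hxy⟩
  calc f x ≤ max (f (-y)) (f y) := hf.le_on_segment (mem_univ _) (mem_univ _) hseg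
    _ = f y := by rw [heven, max_self]

theorem convexOn_abs_rpow {p : ℝ} (hp : 1 ≤ p) : ConvexOn ℝ univ fun x : ℝ => |x| ^ p :=
  (convexOn_rpow hp).comp_of_mapsTo convexOn_univ_norm
    (Real.monotoneOn_rpow_Ici_of_exponent_nonneg (by linarith)) fun x _ => abs_nonneg x

noncomputable def svalGauge (p : ℝ) (q : ℝ × ℝ) : ℝ :=
  |(q.1 + q.2) / 2| ^ p + |(q.1 - q.2) / 2| ^ p

section svalGauge

variable {p : ℝ}

theorem svalGauge_swap (x y : ℝ) : svalGauge p (y, x) = svalGauge p (x, y) := by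
  simp only [svalGauge, add_comm y x, ← neg_sub x y, neg_div, abs_neg]

theorem svalGauge_neg_left (x y : ℝ) : svalGauge p (-x, y) = svalGauge p (x, y) := by
  simp only [svalGauge]
  rw [show (-x + y) / 2 = -((x - y) / 2) by ring, show (-x - y) / 2 = -((x + y) / 2) by ring,
    abs_neg, abs_neg, add_comm]

theorem convexOn_svalGauge (hp : 1 ≤ p) : ConvexOn ℝ univ (svalGauge p) := by
  have h := fun L : ℝ × ℝ →ₗ[ℝ] ℝ => (convexOn_abs_rpow hp).comp_linearMap L
  have hsum := (h ((2⁻¹ : ℝ) • (LinearMap.fst ℝ ℝ ℝ + LinearMap.snd ℝ ℝ ℝ))).add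
    (h ((2⁻¹ : ℝ) • (LinearMap.fst ℝ ℝ ℝ - LinearMap.snd ℝ ℝ ℝ)))
  simp only [preimage_univ] at hsum
  refine hsum.congr fun q _ => ?_
  simp only [svalGauge, Pi.add_apply, Function.comp_apply, LinearMap.smul_apply,
    LinearMap.add_apply, LinearMap.sub_apply, LinearMap.fst_apply, LinearMap.snd_apply,
    smul_eq_mul]
  ring_nf

theorem monotoneOn_svalGauge (hp : 1 ≤ p) : MonotoneOn (svalGauge p) (Ici 0) := by
  have hmono : ∀ y, MonotoneOn (fun x => svalGauge p (x, y)) (Ici 0) := fun y =>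
    ((convexOn_svalGauge hp).comp_prodMk_left y).monotoneOn_Ici_of_even
      fun x => svalGauge_neg_left x y
  rintro ⟨x, y⟩ ⟨hx, hy⟩ ⟨x', y'⟩ ⟨hx', hy'⟩ ⟨hxx', hyy'⟩
  calc svalGauge p (x, y) ≤ svalGauge p (x', y) := hmono y hx hx' hxx'
    _ = svalGauge p (y, x') := (svalGauge_swap _ _).symm
    _ ≤ svalGauge p (y', x') := hmono x' hy hy' hyy'
    _ = svalGauge p (x', y') := svalGauge_swap _ _

end svalGauge

noncomputable def conformalPart : Matrix (Fin 2) (Fin 2) ℝ →ₗ[ℝ] EuclideanSpace ℝ (Fin 2) where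
  toFun A := !₂[A 0 0 + A 1 1, A 0 1 - A 1 0]
  map_add' A B := by
    ext i
    fin_cases i <;>
      simp only [Fin.isValue, Fin.zero_eta, Fin.mk_one, cons_val_zero, cons_val_one,
        cons_val_fin_one, Matrix.add_apply, PiLp.add_apply] <;> ring
  map_smul' c A := by
    ext i
    fin_cases i <;>
      simp only [Fin.isValue, Fin.zero_eta, Fin.mk_one, cons_val_zero, cons_val_one,
        cons_val_fin_one, Matrix.smul_apply, PiLp.smul_apply, smul_eq_mul, Real.ringHom_apply] <;>
      ring

noncomputable def anticonformalPart :
    Matrix (Fin 2) (Fin 2) ℝ →ₗ[ℝ] EuclideanSpace ℝ (Fin 2) where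
  toFun A := !₂[A 0 0 - A 1 1, A 0 1 + A 1 0]
  map_add' A B := by
    ext i
    fin_cases i <;>
      simp only [Fin.isValue, Fin.zero_eta, Fin.mk_one, cons_val_zero, cons_val_one,
        cons_val_fin_one, Matrix.add_apply, PiLp.add_apply] <;> ring
  map_smul' c A := by
    ext i
    fin_cases i <;>
      simp only [Fin.isValue, Fin.zero_eta, Fin.mk_one, cons_val_zero, cons_val_one,
        cons_val_fin_one, Matrix.smul_apply, PiLp.smul_apply, smul_eq_mul, Real.ringHom_apply] <;>
      ring

section ConformalDecomposition

variable (A : Matrix (Fin 2) (Fin 2) ℝ)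

theorem norm_conformalPart_sq :
    ‖conformalPart A‖ ^ 2 = (A 0 0 + A 1 1) ^ 2 + (A 0 1 - A 1 0) ^ 2 := by
  simp [conformalPart, EuclideanSpace.norm_sq_eq, Fin.sum_univ_two]

theorem norm_anticonformalPart_sq :
    ‖anticonformalPart A‖ ^ 2 = (A 0 0 - A 1 1) ^ 2 + (A 0 1 + A 1 0) ^ 2 := by
  simp [anticonformalPart, EuclideanSpace.norm_sq_eq, Fin.sum_univ_two]

theorem trace_transpose_mul_self_eq :
    (Aᵀ * A).trace = (‖conformalPart A‖ ^ 2 + ‖anticonformalPart A‖ ^ 2) / 2 := by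
  rw [norm_conformalPart_sq, norm_anticonformalPart_sq, Matrix.trace_fin_two]
  simp only [Matrix.mul_apply, Matrix.transpose_apply, Fin.sum_univ_two]
  ring

theorem det_eq_conformalPart_anticonformalPart :
    A.det = (‖conformalPart A‖ ^ 2 - ‖anticonformalPart A‖ ^ 2) / 4 := by
  rw [norm_conformalPart_sq, norm_anticonformalPart_sq, Matrix.det_fin_two]
  ring

theorem sqrt_trace_sq_sub_four_det_sq :
    √((Aᵀ * A).trace ^ 2 - 4 * A.det ^ 2) = ‖conformalPart A‖ * ‖anticonformalPart A‖ := by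
  rw [trace_transpose_mul_self_eq, det_eq_conformalPart_anticonformalPart, ← Real.sqrt_sq
    (by positivity : 0 ≤ ‖conformalPart A‖ * ‖anticonformalPart A‖)]
  congr 1
  ring

theorem sval1_eq : sval1 A = (‖conformalPart A‖ + ‖anticonformalPart A‖) / 2 := by
  rw [sval1, sqrt_trace_sq_sub_four_det_sq, trace_transpose_mul_self_eq, ← Real.sqrt_sq
    (by positivity : 0 ≤ (‖conformalPart A‖ + ‖anticonformalPart A‖) / 2)]
  congr 1
  ring

theorem sval2_eq : sval2 A = |(‖conformalPart A‖ - ‖anticonformalPart A‖) / 2| := by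
  rw [sval2, sqrt_trace_sq_sub_four_det_sq, trace_transpose_mul_self_eq, ← Real.sqrt_sq_eq_abs]
  congr 1
  ring

end ConformalDecomposition

theorem convexOn_norm_conformalPart_anticonformalPart :
    ConvexOn ℝ univ fun A : Matrix (Fin 2) (Fin 2) ℝ =>
      (‖conformalPart A‖, ‖anticonformalPart A‖) :=
  (convexOn_univ_norm.comp_linearMap conformalPart).prodMk
    (convexOn_univ_norm.comp_linearMap anticonformalPart)

/-- For `p > 2`, the function `f(A) = σ₁(A)^p + σ₂(A)^p + p·exp(1 − det A)`
is polyconvex: there is a convex `F : ℝ^{2×2} × ℝ → ℝ` with `f(A) = F(A, det A)`. -/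
theorem freg_polyconvex (p : ℝ) (hp : 2 < p) :
    ∃ F : Matrix (Fin 2) (Fin 2) ℝ × ℝ → ℝ,
      ConvexOn ℝ Set.univ F ∧ ∀ A : Matrix (Fin 2) (Fin 2) ℝ, freg p A = F (A, A.det) := by
  have hp1 : 1 ≤ p := by linarith
  refine ⟨fun q => svalGauge p (‖conformalPart q.1‖, ‖anticonformalPart q.1‖) +
    p * Real.exp (1 - q.2), ?_, fun A => ?_⟩
  · have hgauge :=
      ((convexOn_svalGauge hp1).subset (subset_univ _) (convex_Ici 0)).comp_of_mapsTo
        convexOn_norm_conformalPart_anticonformalPart (monotoneOn_svalGauge hp1)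
        fun A _ => Prod.mk_le_mk.2 ⟨norm_nonneg _, norm_nonneg _⟩
    have hexp : ConvexOn ℝ univ fun t : ℝ => p * Real.exp (1 - t) := by
      simpa [Function.comp_def] using (convexOn_exp.comp_affineMap
        (AffineMap.const ℝ ℝ (1 : ℝ) - AffineMap.id ℝ ℝ)).smul (by linarith : (0 : ℝ) ≤ p)
    exact (hgauge.comp_linearMap (LinearMap.fst ℝ _ ℝ)).add
      (hexp.comp_linearMap (LinearMap.snd ℝ _ ℝ))
  · rw [freg, sval1_eq, sval2_eq, ← abs_of_nonneg
      (by positivity : 0 ≤ (‖conformalPart A‖ + ‖anticonformalPart A‖) / 2)]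
    rfl
end

section
/- The function f : ℝ^{2×2} → ℝ defined by f(A) = σ₁(A)^p + σ₂(A)^p + p·exp(1 − det A), with p > 2, is not convex: there exist A, B ∈ ℝ^{2×2} and t ∈ (0,1) such that f(tA + (1−t)B) > t·f(A) + (1−t)·f(B). -/
open Matrix
lemma trace_diag (d : ℝ) : Matrix.trace ((!![d,0;0,d])ᵀ * !![d,0;0,d]) = 2*d^2 := by
  simp [Matrix.trace, Matrix.mul_apply, Fin.sum_univ_two, Matrix.transpose,
    Matrix.of_apply, Matrix.cons_val_zero, Matrix.cons_val_one]
  ring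

lemma det_diag (d : ℝ) : (!![d,0;0,d]).det = d^2 := by
  simp [Matrix.det_fin_two]; ring

lemma freg_diag (p d : ℝ) : freg p !![d,0;0,d] = 2*|d|^p + p*Real.exp (1-d^2) := by
  have h1 : Real.sqrt ((2*d^2)^2 - 4*(d^2)^2) = 0 := by
    rw [show (2*d^2)^2 - 4*(d^2)^2 = 0 by ring, Real.sqrt_zero]
  unfold freg sval1 sval2
  rw [trace_diag, det_diag, h1]
  have h2 : Real.sqrt ((2*d^2 + 0)/2) = |d| := by
    rw [show (2*d^2 + 0)/2 = d^2 by ring, Real.sqrt_sq_eq_abs]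
  have h3 : Real.sqrt ((2*d^2 - 0)/2) = |d| := by
    rw [show (2*d^2 - 0)/2 = d^2 by ring, Real.sqrt_sq_eq_abs]
  rw [h2, h3]; ring

lemma freg_zero (p : ℝ) (hp : p ≠ 0) : freg p 0 = p * Real.exp 1 := by
  unfold freg sval1 sval2
  simp [Real.zero_rpow hp]

/-- For `p > 2`, the function `f(A) = σ₁(A)^p + σ₂(A)^p + p·exp(1 − det A)`
is not convex: there are `A, B` and `t ∈ (0,1)` with
`f(tA + (1−t)B) > t f(A) + (1−t) f(B)`. -/
theorem freg_not_convex (p : ℝ) (hp : 2 < p) :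
    ∃ (A B : Matrix (Fin 2) (Fin 2) ℝ) (t : ℝ), t ∈ Set.Ioo (0 : ℝ) 1 ∧
      t * freg p A + (1 - t) * freg p B < freg p (t • A + (1 - t) • B) := by
  refine ⟨!![1/2,0;0,1/2], !![-(1/2),0;0,-(1/2)], 1/2, ⟨by norm_num, by norm_num⟩, ?_⟩
  have hmid : ((1:ℝ)/2) • !![(1:ℝ)/2,0;0,1/2] + (1-(1:ℝ)/2) • !![-(1/2),0;0,-(1/2)]
      = (0 : Matrix (Fin 2) (Fin 2) ℝ) := by
    ext i j; fin_cases i <;> fin_cases j <;> norm_num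
  rw [hmid, freg_zero p (by linarith), freg_diag, freg_diag]
  have habs : |(1:ℝ)/2| = 1/2 := by norm_num
  have habs2 : |(-(1:ℝ)/2)| = 1/2 := by norm_num
  rw [show |(-((1:ℝ)/2))| = 1/2 by norm_num, habs]
  have hpow : ((1:ℝ)/2) ^ p ≤ 1/4 := by
    have := Real.rpow_le_rpow_of_exponent_ge (x := (1:ℝ)/2) (by norm_num) (by norm_num)
      (le_of_lt hp)
    calc ((1:ℝ)/2) ^ p ≤ ((1:ℝ)/2) ^ (2:ℝ) := this
      _ = 1/4 := by rw [show (2:ℝ) = ((2:ℕ):ℝ) by norm_num, Real.rpow_natCast]; norm_num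
  have he1 : (1:ℝ)/4 + 1 < Real.exp (1/4) := Real.add_one_lt_exp (by norm_num)
  have he2 : (1:ℝ) ≤ Real.exp (3/4) := Real.one_le_exp (by norm_num)
  have hee : Real.exp 1 = Real.exp (3/4) * Real.exp (1/4) := by
    rw [← Real.exp_add]; norm_num
  have hd : (1:ℝ) - ((1:ℝ)/2)^2 = 3/4 := by norm_num
  have hd2 : (1:ℝ) - (-(1:ℝ)/2)^2 = 3/4 := by norm_num
  rw [show (1:ℝ) - ((1:ℝ)/2)^2 = 3/4 by norm_num,
    show (1:ℝ) - (-((1:ℝ)/2))^2 = 3/4 by norm_num]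
  nlinarith [Real.exp_pos (3/4 : ℝ), mul_pos (sub_pos.mpr hp) (Real.exp_pos (3/4:ℝ))]
end

section
/- Scalar minimality inequality: for every p > 2, every μ₁ ∈ ℝ and every μ₂ ≥ 0, one has |μ₁|^p + μ₂^p + p·exp(1 − μ₁μ₂) ≥ 2 + p, with equality when μ₁ = μ₂ = 1. -/
/-- Scalar minimality inequality: for every `p > 2`, every `μ₁ ∈ ℝ` and
every `μ₂ ≥ 0`, one has `|μ₁|^p + μ₂^p + p·exp(1 − μ₁μ₂) ≥ 2 + p`, with equality when
`μ₁ = μ₂ = 1`. -/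
theorem scalar_minimality (p : ℝ) (hp : 2 < p) :
    (∀ μ₁ μ₂ : ℝ, 0 ≤ μ₂ →
      2 + p ≤ |μ₁| ^ p + μ₂ ^ p + p * Real.exp (1 - μ₁ * μ₂)) ∧
    |(1 : ℝ)| ^ p + (1 : ℝ) ^ p + p * Real.exp (1 - 1 * 1) = 2 + p := by
  have hp0 : (0:ℝ) < p := by linarith
  constructor
  · intro μ₁ μ₂ hμ₂
    set a := |μ₁| with ha_def
    have ha : 0 ≤ a := abs_nonneg _
    have key : ∀ t : ℝ, 0 ≤ t → p/2 * t^2 ≤ t ^ p + (p-2)/2 := by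
      intro t ht
      have h := Real.geom_mean_le_arith_mean2_weighted
        (w₁ := 2/p) (w₂ := 1 - 2/p) (p₁ := t ^ p) (p₂ := 1)
        (by positivity) (by rw [sub_nonneg]; rw [div_le_one hp0]; linarith)
        (Real.rpow_nonneg ht p) zero_le_one (by ring)
      have h1 : ((1:ℝ)) ^ (1 - 2/p) = 1 := Real.one_rpow _
      have h2 : (t ^ p) ^ (2/p) = t ^ 2 := by
        rw [← Real.rpow_mul ht, mul_div_cancel₀ _ (ne_of_gt hp0)]
        exact_mod_cast Real.rpow_natCast t 2
      rw [h1, h2, mul_one] at h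
      have := mul_le_mul_of_nonneg_left h (by positivity : (0:ℝ) ≤ p/2)
      have hne : p ≠ 0 := ne_of_gt hp0
      calc p/2 * t^2 ≤ p/2 * (2/p * t ^ p + (1 - 2/p) * 1) := this
        _ = t ^ p + (p-2)/2 := by field_simp
    have e := Real.add_one_le_exp (1 - μ₁ * μ₂)
    have hab : μ₁ * μ₂ ≤ a * μ₂ := mul_le_mul_of_nonneg_right (le_abs_self μ₁) hμ₂
    have ha2 := key a ha
    have hb2 := key μ₂ hμ₂
    have hexp := mul_le_mul_of_nonneg_left e (le_of_lt hp0)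
    nlinarith [sq_nonneg (a - μ₂), mul_le_mul_of_nonneg_left hab (le_of_lt hp0)]
  · have h1 : |(1:ℝ)| = 1 := abs_one
    rw [h1, Real.one_rpow]
    norm_num [Real.exp_zero]
end

section
/- The function f : ℝ^{2×2} → ℝ defined by f(A) = σ₁(A)^p + σ₂(A)^p + p·exp(1 − det A), with p > 2, attains its global minimum on SO(2): for every A ∈ ℝ^{2×2} one has f(A) ≥ 2 + p, and f(R) = 2 + p for every R ∈ SO(2). -/
open Matrix
lemma trace_eq (A : Matrix (Fin 2) (Fin 2) ℝ) :
    Matrix.trace (Aᵀ * A) = A 0 0 ^ 2 + A 0 1 ^ 2 + A 1 0 ^ 2 + A 1 1 ^ 2 := by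
  simp [Matrix.trace_fin_two, Matrix.mul_apply, Fin.sum_univ_two, Matrix.transpose_apply]
  ring

lemma sval_mul (A : Matrix (Fin 2) (Fin 2) ℝ) : sval1 A * sval2 A = |A.det| := by
  set T := Matrix.trace (Aᵀ * A) with hT
  have hTval : T = A 0 0 ^ 2 + A 0 1 ^ 2 + A 1 0 ^ 2 + A 1 1 ^ 2 := trace_eq A
  have hT0 : 0 ≤ T := by rw [hTval]; positivity
  have hdisc : 0 ≤ T ^ 2 - 4 * A.det ^ 2 := by
    rw [hTval, Matrix.det_fin_two]
    nlinarith [sq_nonneg ((A 0 0 - A 1 1) ^ 2 + (A 0 1 + A 1 0) ^ 2),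
      sq_nonneg ((A 0 0 + A 1 1) ^ 2 + (A 0 1 - A 1 0) ^ 2),
      sq_nonneg (A 0 0 - A 1 1), sq_nonneg (A 0 1 + A 1 0),
      sq_nonneg (A 0 0 + A 1 1), sq_nonneg (A 0 1 - A 1 0)]
  set S := Real.sqrt (T ^ 2 - 4 * A.det ^ 2) with hS
  have hS0 : 0 ≤ S := Real.sqrt_nonneg _
  have hSsq : S ^ 2 = T ^ 2 - 4 * A.det ^ 2 := Real.sq_sqrt hdisc
  have hSle : S ≤ T := by
    nlinarith [sq_nonneg (A.det)]
  rw [sval1, sval2, ← hT, ← hS, ← Real.sqrt_mul (by linarith) ((T - S) / 2)]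
  have : (T + S) / 2 * ((T - S) / 2) = A.det ^ 2 := by nlinarith
  rw [this, Real.sqrt_sq_eq_abs]

/-- For `p > 2`, the function `f(A) = σ₁(A)^p + σ₂(A)^p + p·exp(1 − det A)`
attains its global minimum on `SO(2)`: `f(A) ≥ 2 + p` for all `A`, and `f(R) = 2 + p`
for every `R ∈ SO(2)`. -/
theorem freg_min_on_SO2 (p : ℝ) (hp : 2 < p) :
    (∀ A : Matrix (Fin 2) (Fin 2) ℝ, 2 + p ≤ freg p A) ∧
    (∀ R : Matrix (Fin 2) (Fin 2) ℝ, Rᵀ * R = 1 → R.det = 1 → freg p R = 2 + p) := by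
  have hp0 : (0 : ℝ) < p := by linarith
  constructor
  · intro A
    set x := sval1 A with hx
    set y := sval2 A with hy
    have hx0 : 0 ≤ x := Real.sqrt_nonneg _
    have hy0 : 0 ≤ y := Real.sqrt_nonneg _
    have hxy : x * y = |A.det| := sval_mul A
    set D := A.det with hD
    have hexp : Real.exp (1 - D) ≥ 2 - D := by
      have := Real.add_one_le_exp (1 - D)
      linarith
    have hpows : 2 * (x * y) ^ (p / 2) ≤ x ^ p + y ^ p := by
      have h1 : (x * y) ^ (p / 2) = x ^ (p / 2) * y ^ (p / 2) :=
        Real.mul_rpow hx0 hy0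
      have h2 : x ^ p = (x ^ (p / 2)) ^ 2 := by
        rw [← Real.rpow_natCast (x ^ (p/2)) 2, ← Real.rpow_mul hx0]
        norm_num
      have h3 : y ^ p = (y ^ (p / 2)) ^ 2 := by
        rw [← Real.rpow_natCast (y ^ (p/2)) 2, ← Real.rpow_mul hy0]
        norm_num
      rw [h1, h2, h3]
      nlinarith [sq_nonneg (x ^ (p/2) - y ^ (p/2))]
    rcases le_or_gt D 0 with hD0 | hD0
    · have h1 : 0 ≤ x ^ p + y ^ p := by positivity
      have h2 : p * (2 - D) ≤ p * Real.exp (1 - D) := by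
        apply mul_le_mul_of_nonneg_left hexp (le_of_lt hp0)
      have : 2 + p ≤ p * (2 - D) := by nlinarith
      simp only [freg, ← hx, ← hy, ← hD]
      linarith
    · -- D > 0
      have habs : |D| = D := abs_of_pos hD0
      have hbern : 1 + (p / 2) * (D - 1) ≤ D ^ (p / 2) := by
        have := one_add_mul_self_le_rpow_one_add (s := D - 1) (by linarith)
          (p := p / 2) (by linarith)
        simpa using this
      have hxyD : (x * y) ^ (p / 2) = D ^ (p / 2) := by rw [hxy, habs]
      have h2 : p * (2 - D) ≤ p * Real.exp (1 - D) := by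
        apply mul_le_mul_of_nonneg_left hexp (le_of_lt hp0)
      simp only [freg, ← hx, ← hy, ← hD]
      rw [hxyD] at hpows
      nlinarith
  · intro R hRtR hRdet
    have hT : Matrix.trace (Rᵀ * R) = 2 := by
      rw [hRtR, Matrix.trace_one]; simp
    have hdisc : (Matrix.trace (Rᵀ * R)) ^ 2 - 4 * R.det ^ 2 = 0 := by
      rw [hT, hRdet]; norm_num
    have h1 : sval1 R = 1 := by
      rw [sval1, hdisc, hT, Real.sqrt_zero]
      norm_num
    have h2 : sval2 R = 1 := by
      rw [sval2, hdisc, hT, Real.sqrt_zero]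
      norm_num
    rw [freg, h1, h2, hRdet, Real.one_rpow]
    simp
    ring
end
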